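/- arXiv:1401.0320 — 7 statements merged into one kernel-verified Lean document; each statement's English description precedes it below -/
import Mathlib

section
/- Assume: A and B are almost periodic; the family (t_n^{(k)}) is equipotentially almost periodic; 𝒥_n(t) is invertible for every n ∈ ℤ and t ∈ [t_n, t_{n+1}]; every H(n) = Z_n(t_{n+1}) is invertible; the difference equation φ(n+1) = H(n)φ(n) is exponentially stable, i.e. |Φ(n)Φ(k+1)^{-1}| ≤ Kρ^{n−k} for all n ≥ k with K ≥ 1 and 0 < ρ < 1; F : ℝ × (ℂ^q)^ℓ → ℂ^q is uniformly almost periodic and L-Lipschitz; p_1, …, p_ℓ ≥ 1 with p = max_j p_j; and, with L' := √q K₀ θ L where K₀ = exp(|A|_∞ θ), assume 2KL'ℓ/(1−ρ) < 1 so that the DEPCAG y'(t) = A(t)y(t) + B(t)y(γ⁰(t)) + F(t, y(γ^{p_1}(t)), …, y(γ^{p_ℓ}(t))) has an almost periodic solution y. Then there exists K̃ > 0 such that for every solution ỹ of the same DEPCAG on the half-line, defined on {t_{−p}, …, t_{−1}} ∪ [t_0, ∞) with prescribed values ỹ(t_{−j}) (j = 0, …, p), one has |y(t) − ỹ(t)|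 ≤ K̃ · (ρ(1 + KL'ℓρ^{−p}))ⁿ · max_{0 ≤ j ≤ p} |y(t_{−j}) − ỹ(t_{−j})| for every t ∈ [t_n, t_{n+1}) with n ≥ 0. In particular, if KL'ℓ/(1−ρ) < ρ^{p−1}, then y is exponentially stable as t → +∞. -/
open scoped Matrix
open MeasureTheory Filter

attribute [local instance] Matrix.frobeniusSeminormedAddCommGroup
  Matrix.frobeniusNormedAddCommGroup Matrix.frobeniusNormedSpace
  Matrix.frobeniusNormedRing Matrix.frobeniusNormedAlgebra Matrix.frobeniusIsBoundedSMul

noncomputable section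

abbrev Mat (q : ℕ) := Matrix (Fin q) (Fin q) ℂ
abbrev Vec (q : ℕ) := EuclideanSpace ℂ (Fin q)

/-- Action of a `q × q` complex matrix on `ℂ^q` with the Euclidean norm. -/
def aMul {q : ℕ} (M : Mat q) (v : Vec q) : Vec q := Matrix.toEuclideanLin M v

/-- A set of reals is relatively dense. -/
def RelDenseR (E : Set ℝ) : Prop :=
  ∃ l : ℝ, 0 < l ∧ ∀ m : ℝ, (E ∩ Set.Icc m (m + l)).Nonempty

/-- A set of integers is relatively dense in `ℤ`. -/
def RelDenseZ (E : Set ℤ) : Prop :=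
  ∃ l : ℤ, 0 < l ∧ ∀ m : ℤ, (E ∩ Set.Icc m (m + l)).Nonempty

/-- Almost periodic (continuous) function on `ℝ`. -/
def APR {E : Type*} [NormedAddCommGroup E] (g : ℝ → E) : Prop :=
  Continuous g ∧ ∀ ε : ℝ, 0 < ε →
    RelDenseR {τ : ℝ | ∀ t : ℝ, ‖g (t + τ) - g t‖ ≤ ε}

/-- Almost periodic sequence on `ℤ`. -/
def APZ {E : Type*} [NormedAddCommGroup E] (x : ℤ → E) : Prop :=
  ∀ ε : ℝ, 0 < ε → RelDenseZ {τ : ℤ | ∀ n : ℤ, ‖x (n + τ) - x n‖ ≤ ε}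

/-- The family `t_n^{(k)} = t_{n+k} - t_n` is equipotentially almost periodic. -/
def EquiAP (ts : ℤ → ℝ) : Prop :=
  ∀ ε : ℝ, 0 < ε → RelDenseZ {T : ℤ | ∀ k n : ℤ,
    |(ts (T + n + k) - ts (T + n)) - (ts (n + k) - ts n)| ≤ ε}

/-- `X(t,s) = X(t) X(s)⁻¹`. -/
def XX {q : ℕ} (X : ℝ → Mat q) (t s : ℝ) : Mat q := X t * (X s)⁻¹

/-- `𝒥_n(t) = I + ∫_{t_n}^t X(t_n,u) B(u) du`. -/
def Jmat {q : ℕ} (X B : ℝ → Mat q) (ts : ℤ → ℝ) (n : ℤ) (r : ℝ) : Mat q :=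
  1 + ∫ u in (ts n)..r, XX X (ts n) u * B u

/-- `Z_n(t) = X(t,t_n) 𝒥_n(t)`. -/
def Zmat {q : ℕ} (X B : ℝ → Mat q) (ts : ℤ → ℝ) (n : ℤ) (r : ℝ) : Mat q :=
  XX X r (ts n) * Jmat X B ts n r

/-- `F : ℝ × (ℂ^q)^ℓ → ℂ^q` is uniformly almost periodic on `W = (ℂ^q)^ℓ`. -/
def UnifAPR {q ℓ : ℕ} (F : ℝ → (Fin ℓ → Vec q) → Vec q) : Prop :=
  Continuous (fun p : ℝ × (Fin ℓ → Vec q) => F p.1 p.2) ∧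
    ∀ ε : ℝ, 0 < ε → RelDenseR {τ : ℝ | ∀ t : ℝ, ∀ w : Fin ℓ → Vec q,
      ‖F (t + τ) w - F t w‖ ≤ ε}

/-- `F` is `L`-Lipschitz in the function-value arguments. -/
def LipF {q ℓ : ℕ} (L : ℝ) (F : ℝ → (Fin ℓ → Vec q) → Vec q) : Prop :=
  ∀ t : ℝ, ∀ x y : Fin ℓ → Vec q, ‖F t x - F t y‖ ≤ L * ∑ j : Fin ℓ, ‖x j - y j‖

/-- `y` solves the DEPCAG `y' = A(t)y + B(t)y(γ⁰(t)) + F(t, y(γ^{p_1}(t)), …, y(γ^{p_ℓ}(t)))`: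
it is continuous and, on each `(t_n, t_{n+1})` (i.e. off the nodes), it is differentiable
and the equation holds with `γ^{p}(t) = t_{n-p}`. -/
def IsSolNL {q ℓ : ℕ} (ts : ℤ → ℝ) (A B : ℝ → Mat q) (p : Fin ℓ → ℕ)
    (F : ℝ → (Fin ℓ → Vec q) → Vec q) (y : ℝ → Vec q) : Prop :=
  Continuous y ∧ ∀ n : ℤ, ∀ r ∈ Set.Ioo (ts n) (ts (n + 1)),
    HasDerivAt y (aMul (A r) (y r) + aMul (B r) (y (ts n)) +
      F r (fun j => y (ts (n - (p j : ℤ))))) r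


/-- `ỹ` is a solution of the nonlinear DEPCAG on the half-line `[t_0, ∞)` (its values at
the nodes `t_{-1}, …, t_{-p}` act as prescribed initial data for the delayed arguments). -/
def HalfSolNL {q ℓ : ℕ} (ts : ℤ → ℝ) (A B : ℝ → Mat q) (p : Fin ℓ → ℕ)
    (F : ℝ → (Fin ℓ → Vec q) → Vec q) (y : ℝ → Vec q) : Prop :=
  ContinuousOn y (Set.Ici (ts 0)) ∧ ∀ n : ℤ, 0 ≤ n → ∀ r ∈ Set.Ioo (ts n) (ts (n + 1)),
    HasDerivAt y (aMul (A r) (y r) + aMul (B r) (y (ts n)) +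
      F r (fun j => y (ts (n - (p j : ℤ))))) r

/-!
Write `z = y - ỹ`. On `[t_k, t_{k+1}]` variation of constants gives
`z(t) = Z_k(t) z(t_k) + ∫_{t_k}^t X(t,s) (F(s, y(t_{k-p_j})) - F(s, ỹ(t_{k-p_j}))) ds`, and since
Gronwall bounds `|X(t,s)|` by `K₀ = √q e^{|A|_∞ θ}` on such intervals, the integral is at most
`L' Σ_j |z(t_{k-p_j})|`. At the nodes this is a perturbation of `φ(n+1) = H(n)φ(n)`, so the
discrete variation-of-constants formula and the exponential stability of `Φ` turn it into a
discrete inequality with delays, whose solutions grow at most like `βⁿ` with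
`β = ρ(1 + K L' ℓ ρ^{-p})`: by strong induction, the sum of the delayed terms telescopes into
the geometric sum `Σ_k ρ^{n-1-k} β^k (β - ρ) = βⁿ - ρⁿ`. Interpolating once more on
`[t_n, t_{n+1})` gives the first claim; when `β < 1`, the bound `t_n ≤ t_0 + nθ` converts `βⁿ`
into `α^t` with `α = β^{1/θ}`.
-/
section MatrixAction

variable {q : ℕ}

lemma aMul_eq_toEuclideanCLM (M : Mat q) (v : Vec q) :
    aMul M v = Matrix.toEuclideanCLM (𝕜 := ℂ) M v :=
  rfl

@[simp] lemma one_aMul (v : Vec q) : aMul 1 v = v := by simp [aMul_eq_toEuclideanCLM]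

lemma mul_aMul (M N : Mat q) (v : Vec q) : aMul (M * N) v = aMul M (aMul N v) := by
  simp [aMul_eq_toEuclideanCLM]

lemma add_aMul (M N : Mat q) (v : Vec q) : aMul (M + N) v = aMul M v + aMul N v := by
  simp [aMul_eq_toEuclideanCLM]

lemma neg_aMul (M : Mat q) (v : Vec q) : aMul (-M) v = -aMul M v := by
  simp [aMul_eq_toEuclideanCLM]

lemma smul_aMul (c : ℝ) (M : Mat q) (v : Vec q) : aMul (c • M) v = c • aMul M v := by
  rw [aMul_eq_toEuclideanCLM, aMul_eq_toEuclideanCLM, ← Complex.coe_smul, map_smul,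
    smul_apply, Complex.coe_smul]

lemma aMul_add (M : Mat q) (v w : Vec q) : aMul M (v + w) = aMul M v + aMul M w := map_add _ v w

lemma aMul_sub (M : Mat q) (v w : Vec q) : aMul M (v - w) = aMul M v - aMul M w := map_sub _ v w

lemma aMul_sum {ι : Type*} (M : Mat q) (s : Finset ι) (v : ι → Vec q) :
    aMul M (∑ i ∈ s, v i) = ∑ i ∈ s, aMul M (v i) := map_sum _ v s

lemma aMul_smul (c : ℝ) (M : Mat q) (v : Vec q) : aMul M (c • v) = c • aMul M v := by
  simp [aMul_eq_toEuclideanCLM]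

lemma norm_aMul_le (M : Mat q) (v : Vec q) : ‖aMul M v‖ ≤ ‖M‖ * ‖v‖ := by
  have hcol : ∀ w : Vec q, ‖Matrix.replicateCol Unit (WithLp.ofLp w)‖ = ‖w‖ := fun w => by
    rw [Matrix.frobenius_norm_replicateCol]
  rw [← hcol, ← hcol, aMul, Matrix.toLpLin_apply, WithLp.ofLp_toLp, Matrix.replicateCol_mulVec]
  exact Matrix.frobenius_norm_mul _ _

def aMulCLM : Mat q →L[ℝ] Vec q →L[ℝ] Vec q :=
  (LinearMap.mk₂ ℝ aMul add_aMul smul_aMul aMul_add aMul_smul).mkContinuous₂ 1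
    fun M v => by simpa using norm_aMul_le M v

lemma norm_one_mat : ‖(1 : Mat q)‖ = Real.sqrt q := by
  simpa using congrArg NNReal.toReal (Matrix.frobenius_nnnorm_one (n := Fin q) (α := ℂ))

end MatrixAction

section MatrixCalculus

variable {q : ℕ}

lemma HasDerivAt.aMul {N : ℝ → Mat q} {w : ℝ → Vec q} {N' : Mat q} {w' : Vec q} {t : ℝ}
    (hN : HasDerivAt N N' t) (hw : HasDerivAt w w' t) :
    HasDerivAt (fun s => aMul (N s) (w s)) (aMul N' (w t) + aMul (N t) w') t :=
  (aMulCLM.hasFDerivAt.comp_hasDerivAt t hN).clm_apply hw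

lemma Continuous.aMul {N : ℝ → Mat q} {w : ℝ → Vec q} (hN : Continuous N) (hw : Continuous w) :
    Continuous fun s => aMul (N s) (w s) :=
  (aMulCLM.continuous.comp hN).clm_apply hw

lemma ContinuousOn.aMul {N : ℝ → Mat q} {w : ℝ → Vec q} {S : Set ℝ} (hN : ContinuousOn N S)
    (hw : ContinuousOn w S) : ContinuousOn (fun s => aMul (N s) (w s)) S :=
  (aMulCLM.continuous.comp_continuousOn hN).clm_apply hw

lemma aMul_intervalIntegral {f : ℝ → Vec q} {c d : ℝ} (M : Mat q)
    (hf : IntervalIntegrable f volume c d) :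
    aMul M (∫ s in c..d, f s) = ∫ s in c..d, aMul M (f s) :=
  ((aMulCLM M).intervalIntegral_comp_comm hf).symm

lemma intervalIntegral_aMul {N : ℝ → Mat q} (c d : ℝ) (v : Vec q) (hN : Continuous N) :
    aMul (∫ s in c..d, N s) v = ∫ s in c..d, aMul (N s) v :=
  ((aMulCLM.flip v).intervalIntegral_comp_comm (hN.intervalIntegrable c d)).symm

lemma HasDerivAt.matrix_inv {N : ℝ → Mat q} {N' : Mat q} {t : ℝ} (hN : HasDerivAt N N' t)
    (hNt : IsUnit (N t)) : HasDerivAt (fun s => (N s)⁻¹) (-((N t)⁻¹ * N' * (N t)⁻¹)) t := by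
  obtain ⟨u, hu⟩ := hNt
  have hinv : HasFDerivAt Ring.inverse _ (N t) := hu ▸ hasFDerivAt_ringInverse (𝕜 := ℝ) u
  have h := hinv.comp_hasDerivAt t hN
  simp only [Function.comp_def, neg_apply, ContinuousLinearMap.mulLeftRight_apply] at h
  simp only [Matrix.nonsing_inv_eq_ringInverse, ← hu, Ring.inverse_unit]
  -- not `simpa`: `h` uses the Frobenius topology on matrices and the goal the entrywise one,
  -- which agree only after unfolding instances
  exact h

end MatrixCalculus

lemma norm_le_mul_exp_of_hasDerivAt {E : Type*} [NormedAddCommGroup E] [NormedSpace ℝ E]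
    {f g : ℝ → E} {a s u : ℝ} (hf : ∀ t, HasDerivAt f (g t) t) (hg : ∀ t, ‖g t‖ ≤ a * ‖f t‖)
    (hsu : s ≤ u) : ‖f u‖ ≤ ‖f s‖ * Real.exp (a * (u - s)) := by
  have h := norm_le_gronwallBound_of_norm_deriv_right_le (ε := 0)
    (fun t _ => (hf t).continuousAt.continuousWithinAt) (fun t _ => (hf t).hasDerivWithinAt)
    le_rfl (fun t _ => by simpa using hg t) u ⟨hsu, le_rfl⟩
  rwa [gronwallBound_ε0] at h

section FundamentalMatrix

open Set

variable {q : ℕ} {A X : ℝ → Mat q}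

structure IsFundamentalMatrix (A X : ℝ → Mat q) : Prop where
  hasDerivAt : ∀ t, HasDerivAt X (A t * X t) t
  isUnit : ∀ t, IsUnit (X t)

namespace IsFundamentalMatrix

lemma XX_self (hX : IsFundamentalMatrix A X) (t : ℝ) : XX X t t = 1 :=
  Matrix.mul_nonsing_inv _ ((Matrix.isUnit_iff_isUnit_det _).mp (hX.isUnit t))

lemma XX_mul_XX (hX : IsFundamentalMatrix A X) (t s u : ℝ) : XX X t s * XX X s u = XX X t u := by
  simp only [XX, mul_assoc, ← mul_assoc (X s)⁻¹,
    Matrix.nonsing_inv_mul _ ((Matrix.isUnit_iff_isUnit_det _).mp (hX.isUnit s)), one_mul]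

lemma hasDerivAt_inv (hX : IsFundamentalMatrix A X) (t : ℝ) :
    HasDerivAt (fun s => (X s)⁻¹) (-((X t)⁻¹ * A t)) t := by
  convert (hX.hasDerivAt t).matrix_inv (hX.isUnit t) using 1
  rw [mul_assoc, mul_assoc, ← XX, hX.XX_self, mul_one]

lemma continuous_inv (hX : IsFundamentalMatrix A X) :
    Continuous fun t => (X t)⁻¹ :=
  continuous_iff_continuousAt.mpr fun t => (hX.hasDerivAt_inv t).continuousAt

lemma hasDerivAt_XX_left (hX : IsFundamentalMatrix A X) (s t : ℝ) :
    HasDerivAt (fun t => XX X t s) (A t * XX X t s) t := by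
  have h := (hX.hasDerivAt t).mul_const (X s)⁻¹
  simp only [mul_assoc] at h
  exact h

lemma hasDerivAt_XX_right (hX : IsFundamentalMatrix A X) (s t : ℝ) :
    HasDerivAt (fun t => XX X s t) (-(XX X s t * A t)) t := by
  have h := (hX.hasDerivAt_inv t).const_mul (X s)
  simp only [mul_neg, ← mul_assoc] at h
  exact h

lemma norm_XX_le (hX : IsFundamentalMatrix A X) {a θ : ℝ} (hA : ∀ t, ‖A t‖ ≤ a) {s u : ℝ}
    (hsu : s ≤ u) (huθ : u ≤ s + θ) :
    ‖XX X u s‖ ≤ Real.sqrt q * Real.exp (a * θ) ∧ ‖XX X s u‖ ≤ Real.sqrt q * Real.exp (a * θ) := by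
  have hfwd := norm_le_mul_exp_of_hasDerivAt (a := a) (hX.hasDerivAt_XX_left s)
    (fun t => (norm_mul_le _ _).trans (mul_le_mul_of_nonneg_right (hA t) (norm_nonneg _))) hsu
  have hbwd := norm_le_mul_exp_of_hasDerivAt (a := a) (hX.hasDerivAt_XX_right s)
    (fun t => (norm_neg _).trans_le <| (norm_mul_le _ _).trans <| by
      rw [mul_comm]; exact mul_le_mul_of_nonneg_right (hA t) (norm_nonneg _)) hsu
  rw [hX.XX_self, norm_one_mat] at hfwd hbwd
  have hexp : Real.sqrt q * Real.exp (a * (u - s)) ≤ Real.sqrt q * Real.exp (a * θ) := by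
    have ha : 0 ≤ a := (norm_nonneg _).trans (hA 0)
    gcongr
    linarith
  exact ⟨hfwd.trans hexp, hbwd.trans hexp⟩

lemma eq_XX_add_integral (hX : IsFundamentalMatrix A X)
    {g z : ℝ → Vec q} (hg : Continuous g) {c d : ℝ} (hcd : c ≤ d)
    (hzc : ContinuousOn z (Icc c d)) (hz : ∀ r ∈ Ioo c d, HasDerivAt z (aMul (A r) (z r) + g r) r) :
    z d = aMul (XX X d c) (z c) + ∫ s in c..d, aMul (XX X d s) (g s) := by
  have hXinvc := hX.continuous_inv
  set w : ℝ → Vec q := fun s => aMul (X s)⁻¹ (z s)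
  have hw : ∀ r ∈ Ioo c d, HasDerivAt w (aMul (X r)⁻¹ (g r)) r := fun r hr => by
    convert (hX.hasDerivAt_inv r).aMul (hz r hr) using 1
    rw [neg_aMul, mul_aMul, aMul_add]
    abel
  have hint : IntervalIntegrable (fun s => aMul (X s)⁻¹ (g s)) volume c d :=
    (hXinvc.aMul hg).intervalIntegrable c d
  have hftc : w d = w c + ∫ s in c..d, aMul (X s)⁻¹ (g s) := by
    rw [intervalIntegral.integral_eq_sub_of_hasDeriv_right_of_le hcd
      (hXinvc.continuousOn.aMul hzc) (fun r hr => (hw r hr).hasDerivWithinAt) hint]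
    abel
  calc z d = aMul (X d) (w d) := by rw [← mul_aMul, ← XX, hX.XX_self, one_aMul]
    _ = aMul (XX X d c) (z c) + ∫ s in c..d, aMul (XX X d s) (g s) := by
      rw [hftc, aMul_add, aMul_intervalIntegral _ hint, ← mul_aMul]
      simp only [← mul_aMul, XX]

end IsFundamentalMatrix

end FundamentalMatrix

section OneStep

open Set

variable {q : ℕ} {A B X : ℝ → Mat q} {ts : ℤ → ℝ}

lemma IsFundamentalMatrix.Zmat_eq (hX : IsFundamentalMatrix A X) (hB : Continuous B) (n : ℤ)
    (d : ℝ) : Zmat X B ts n d = XX X d (ts n) + ∫ s in (ts n)..d, XX X d s * B s := by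
  have hcont : Continuous fun s => XX X (ts n) s * B s :=
    (continuous_const.mul hX.continuous_inv).mul hB
  have hpull : XX X d (ts n) * (∫ s in (ts n)..d, XX X (ts n) s * B s)
      = ∫ s in (ts n)..d, XX X d (ts n) * (XX X (ts n) s * B s) :=
    ((ContinuousLinearMap.mul ℝ (Mat q) _).intervalIntegral_comp_comm
      (hcont.intervalIntegrable _ _)).symm
  rw [Zmat, Jmat, mul_add, mul_one, hpull]
  simp only [← mul_assoc, hX.XX_mul_XX]

lemma IsFundamentalMatrix.eq_Zmat_add_integral (hX : IsFundamentalMatrix A X) (hB : Continuous B)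
    {h z : ℝ → Vec q} (hh : Continuous h) {n : ℤ} {d : ℝ} (hnd : ts n ≤ d)
    (hzc : ContinuousOn z (Icc (ts n) d))
    (hz : ∀ r ∈ Ioo (ts n) d,
      HasDerivAt z (aMul (A r) (z r) + (aMul (B r) (z (ts n)) + h r)) r) :
    z d = aMul (Zmat X B ts n d) (z (ts n)) + ∫ s in (ts n)..d, aMul (XX X d s) (h s) := by
  have hXX : Continuous fun s => XX X d s := continuous_const.mul hX.continuous_inv
  have hBz : Continuous fun s => aMul (B s) (z (ts n)) := hB.aMul continuous_const
  have hXXB : Continuous fun s => XX X d s * B s := hXX.mul hB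
  rw [hX.eq_XX_add_integral (g := fun s => aMul (B s) (z (ts n)) + h s) (hBz.add hh) hnd hzc hz,
    hX.Zmat_eq hB, add_aMul, intervalIntegral_aMul _ _ _ hXXB]
  simp only [aMul_add, mul_aMul]
  rw [intervalIntegral.integral_add ((hXX.aMul hBz).intervalIntegrable _ _)
    ((hXX.aMul hh).intervalIntegrable _ _)]
  abel

lemma IsFundamentalMatrix.norm_integral_XX_le (hX : IsFundamentalMatrix A X) {a θ C : ℝ}
    (hA : ∀ t, ‖A t‖ ≤ a) {g : ℝ → Vec q} (hg : ∀ s, ‖g s‖ ≤ C) {c d : ℝ} (hcd : c ≤ d)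
    (hdθ : d ≤ c + θ) :
    ‖∫ s in c..d, aMul (XX X d s) (g s)‖ ≤ Real.sqrt q * Real.exp (a * θ) * C * θ := by
  have hC : 0 ≤ C := (norm_nonneg _).trans (hg 0)
  have hbound : ∀ s ∈ uIoc c d, ‖aMul (XX X d s) (g s)‖ ≤ Real.sqrt q * Real.exp (a * θ) * C :=
    fun s hs => by
      rw [uIoc_of_le hcd] at hs
      exact (norm_aMul_le _ _).trans (mul_le_mul (hX.norm_XX_le hA hs.2 (by linarith [hs.1])).1
        (hg s) (norm_nonneg _) (by positivity))
  refine (intervalIntegral.norm_integral_le_of_norm_le_const hbound).trans ?_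
  rw [abs_of_nonneg (sub_nonneg.mpr hcd)]
  gcongr
  linarith

lemma IsFundamentalMatrix.norm_Zmat_le (hX : IsFundamentalMatrix A X) {a b θ : ℝ}
    (hA : ∀ t, ‖A t‖ ≤ a) (hBb : ∀ t, ‖B t‖ ≤ b) {n : ℤ} {r : ℝ} (hnr : ts n ≤ r)
    (hrθ : r ≤ ts n + θ) :
    ‖Zmat X B ts n r‖ ≤ Real.sqrt q * Real.exp (a * θ) *
      (Real.sqrt q + Real.sqrt q * Real.exp (a * θ) * b * θ) := by
  rw [Zmat, Jmat]
  have hJ : ‖∫ u in (ts n)..r, XX X (ts n) u * B u‖ ≤ Real.sqrt q * Real.exp (a * θ) * b * θ := by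
    have hbound : ∀ u ∈ uIoc (ts n) r,
        ‖XX X (ts n) u * B u‖ ≤ Real.sqrt q * Real.exp (a * θ) * b := fun u hu => by
      rw [uIoc_of_le hnr] at hu
      exact (norm_mul_le _ _).trans (mul_le_mul (hX.norm_XX_le hA hu.1.le (by linarith [hu.2])).2
        (hBb u) (norm_nonneg _) (by positivity))
    refine (intervalIntegral.norm_integral_le_of_norm_le_const hbound).trans ?_
    have hb : 0 ≤ b := (norm_nonneg _).trans (hBb 0)
    rw [abs_of_nonneg (sub_nonneg.mpr hnr)]
    gcongr
    linarith
  refine (norm_mul_le _ _).trans (mul_le_mul (hX.norm_XX_le hA hnr hrθ).1 ?_ (norm_nonneg _)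
    (by positivity))
  exact (norm_add_le _ _).trans (by rw [norm_one_mat]; gcongr)

end OneStep

section DiscreteVariation

variable {q : ℕ}

lemma eq_discrete_variation_of_constants {Φ H : ℕ → Mat q} (hΦ : ∀ n, Φ (n + 1) = H n * Φ n)
    (hΦu : ∀ n, IsUnit (Φ n)) {ζ r : ℕ → Vec q} (hζ : ∀ n, ζ (n + 1) = aMul (H n) (ζ n) + r n)
    (n : ℕ) :
    ζ n = aMul (Φ n * (Φ 0)⁻¹) (ζ 0) + ∑ k ∈ Finset.range n, aMul (Φ n * (Φ (k + 1))⁻¹) (r k) := by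
  induction n with
  | zero => simp [Matrix.mul_nonsing_inv _ ((Matrix.isUnit_iff_isUnit_det _).mp (hΦu 0))]
  | succ n ih =>
    rw [hζ, ih, aMul_add, aMul_sum, Finset.sum_range_succ,
      Matrix.mul_nonsing_inv _ ((Matrix.isUnit_iff_isUnit_det _).mp (hΦu (n + 1))), one_aMul]
    simp only [← mul_aMul, ← mul_assoc, ← hΦ]
    abel

lemma norm_le_of_discrete_variation {Φ : ℤ → Mat q} {H : ℕ → Mat q}
    (hΦ : ∀ n : ℕ, Φ (n + 1) = H n * Φ n) (hΦu : ∀ n : ℕ, IsUnit (Φ n)) {K ρ : ℝ} (hK : 0 ≤ K)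
    (hρ0 : 0 ≤ ρ) (hρ1 : ρ ≤ 1) (hstab : ∀ n k : ℤ, k ≤ n → ‖Φ n * (Φ (k + 1))⁻¹‖ ≤ K * ρ ^ (n - k))
    {ζ r : ℕ → Vec q} (hζ : ∀ n, ζ (n + 1) = aMul (H n) (ζ n) + r n) (n : ℕ) :
    ‖ζ n‖ ≤ K * ρ ^ n * ‖ζ 0‖ + ∑ k ∈ Finset.range n, K * ρ ^ (n - k) * ‖r k‖ := by
  have hrep := eq_discrete_variation_of_constants (Φ := fun n : ℕ => Φ n) (fun n => by
    simpa using hΦ n) hΦu hζ n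
  have hinit : ‖Φ n * (Φ 0)⁻¹‖ ≤ K * ρ ^ n := by
    have h := hstab n (-1) (by omega)
    rw [show ((n : ℤ) - -1) = ((n + 1 : ℕ) : ℤ) by push_cast; ring, zpow_natCast,
      neg_add_cancel] at h
    exact h.trans (mul_le_mul_of_nonneg_left (pow_le_pow_of_le_one hρ0 hρ1 n.le_succ) hK)
  have hstep : ∀ k < n, ‖Φ n * (Φ ((k + 1 : ℕ) : ℤ))⁻¹‖ ≤ K * ρ ^ (n - k) := fun k hk => by
    have h := hstab n k (by omega)
    rwa [show ((n : ℤ) - k) = ((n - k : ℕ) : ℤ) by omega, zpow_natCast, ← Nat.cast_succ] at h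
  rw [hrep]
  refine (norm_add_le _ _).trans (add_le_add ?_ ((norm_sum_le _ _).trans ?_))
  · exact (norm_aMul_le _ _).trans
      (mul_le_mul_of_nonneg_right (by simpa using hinit) (norm_nonneg _))
  · refine Finset.sum_le_sum fun k hk => (norm_aMul_le _ _).trans ?_
    gcongr
    exact hstep k (Finset.mem_range.mp hk)

end DiscreteVariation

section DelayGronwall

def delayRate (K c : ℝ) (ℓ : ℕ) (ρ : ℝ) (p : ℕ) : ℝ := ρ * (1 + K * c * ℓ * (ρ ^ p)⁻¹)

variable {K c ρ : ℝ} {ℓ pm : ℕ}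

lemma delayRate_sub_self (K c : ℝ) (ℓ : ℕ) (ρ : ℝ) (pm : ℕ) :
    delayRate K c ℓ ρ pm - ρ = K * c * ℓ * ρ * (ρ ^ pm)⁻¹ := by
  rw [delayRate]; ring

lemma le_delayRate (hK : 0 ≤ K) (hc : 0 ≤ c) (hρ : 0 ≤ ρ) : ρ ≤ delayRate K c ℓ ρ pm := by
  have := delayRate_sub_self K c ℓ ρ pm
  have : 0 ≤ K * c * ℓ * ρ * (ρ ^ pm)⁻¹ := by positivity
  linarith

lemma pow_le_delayRate_pow (hK : 0 ≤ K) (hc : 0 ≤ c) (hρ0 : 0 < ρ) (hρ1 : ρ ≤ 1) {e : ℕ}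
    (he : e ≤ pm) : ρ ^ pm ≤ delayRate K c ℓ ρ pm ^ e := by
  have hρβ := le_delayRate (ℓ := ℓ) (pm := pm) hK hc hρ0.le
  rcases le_total (delayRate K c ℓ ρ pm) 1 with hβ1 | hβ1
  · exact (pow_le_pow_left₀ hρ0.le hρβ pm).trans
      (pow_le_pow_of_le_one (hρ0.le.trans hρβ) hβ1 he)
  · exact (pow_le_one₀ hρ0.le hρ1).trans (one_le_pow₀ hβ1)

lemma delayRate_lt_one (hρ0 : 0 < ρ) (hρ1 : ρ < 1)
    (hsmall : K * c * ℓ / (1 - ρ) < ρ ^ (pm - 1)) : delayRate K c ℓ ρ pm < 1 := by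
  have hρpm : ρ ^ (pm - 1) * ρ ≤ ρ ^ pm := by
    rcases Nat.eq_zero_or_pos pm with rfl | hpm
    · simpa using hρ1.le
    · rw [← pow_succ, Nat.sub_add_cancel hpm]
  have hKc : K * c * ℓ * ρ < ρ ^ pm * (1 - ρ) := by
    rw [div_lt_iff₀ (by linarith)] at hsmall
    nlinarith
  have hd : K * c * ℓ * ρ * (ρ ^ pm)⁻¹ < 1 - ρ := by
    rw [← div_eq_mul_inv, div_lt_iff₀ (pow_pos hρ0 pm)]
    linarith
  have := delayRate_sub_self K c ℓ ρ pm
  linarith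

variable {U : ℤ → ℝ} {p : Fin ℓ → ℕ} {M : ℝ}

lemma sum_delay_le (hK : 1 ≤ K) (hc : 0 ≤ c) (hρ0 : 0 < ρ) (hρ1 : ρ ≤ 1) (hM : 0 ≤ M)
    (hp : ∀ j, p j ≤ pm) (hinit : ∀ m : ℤ, -pm ≤ m → m ≤ 0 → U m ≤ M) {n : ℕ}
    (hU : ∀ m ≤ n, U m ≤ K * delayRate K c ℓ ρ pm ^ m * M) :
    ∑ j, U (n - p j) ≤ ℓ * (K * delayRate K c ℓ ρ pm ^ n * (ρ ^ pm)⁻¹ * M) := by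
  set β := delayRate K c ℓ ρ pm
  have hβ0 : 0 ≤ β := hρ0.le.trans (le_delayRate (by linarith) hc hρ0.le)
  have hgain : ∀ e ≤ pm, 1 ≤ β ^ e * (ρ ^ pm)⁻¹ := fun e he => by
    rw [← div_eq_mul_inv, one_le_div (pow_pos hρ0 pm)]
    exact pow_le_delayRate_pow (by linarith) hc hρ0 hρ1 he
  have hterm : ∀ j, U (n - p j) ≤ K * β ^ n * (ρ ^ pm)⁻¹ * M := fun j => by
    rcases le_or_gt (p j) n with hjn | hjn
    · have hpow : β ^ (n - p j) ≤ β ^ n * (ρ ^ pm)⁻¹ :=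
        calc β ^ (n - p j) ≤ β ^ (n - p j) * (β ^ p j * (ρ ^ pm)⁻¹) :=
              le_mul_of_one_le_right (pow_nonneg hβ0 _) (hgain _ (hp j))
          _ = β ^ n * (ρ ^ pm)⁻¹ := by rw [← mul_assoc, ← pow_add, Nat.sub_add_cancel hjn]
      calc U (n - p j) = U (n - p j : ℕ) := by rw [Nat.cast_sub hjn]
        _ ≤ K * β ^ (n - p j) * M := hU _ (Nat.sub_le _ _)
        _ ≤ K * (β ^ n * (ρ ^ pm)⁻¹) * M := by gcongr
        _ = K * β ^ n * (ρ ^ pm)⁻¹ * M := by ring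
    · calc U (n - p j) ≤ M := hinit _ (by linarith [hp j]) (by omega)
        _ = 1 * 1 * M := by ring
        _ ≤ K * (β ^ n * (ρ ^ pm)⁻¹) * M := by
          gcongr; exact hgain n (by linarith [hp j])
        _ = K * β ^ n * (ρ ^ pm)⁻¹ * M := by ring
  calc ∑ j, U (n - p j) ≤ ∑ _j : Fin ℓ, K * β ^ n * (ρ ^ pm)⁻¹ * M :=
        Finset.sum_le_sum fun j _ => hterm j
    _ = ℓ * (K * β ^ n * (ρ ^ pm)⁻¹ * M) := by simp

lemma le_delayRate_pow_of_le_delay_sum (hK : 1 ≤ K) (hc : 0 ≤ c) (hρ0 : 0 < ρ) (hρ1 : ρ ≤ 1)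
    (hM : 0 ≤ M) (hp : ∀ j, p j ≤ pm) (hinit : ∀ m : ℤ, -pm ≤ m → m ≤ 0 → U m ≤ M)
    (hrec : ∀ n : ℕ, U n ≤ K * ρ ^ n * M +
      ∑ k ∈ Finset.range n, K * ρ ^ (n - k) * (c * ∑ j, U (k - p j))) (n : ℕ) :
    U n ≤ K * delayRate K c ℓ ρ pm ^ n * M := by
  set β := delayRate K c ℓ ρ pm
  induction n using Nat.strong_induction_on with
  | _ n ih =>
    have hterm : ∀ k ∈ Finset.range n, K * ρ ^ (n - k) * (c * ∑ j, U (k - p j))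
        ≤ K * M * (β ^ k * ρ ^ (n - 1 - k) * (β - ρ)) := fun k hk => by
      have hkn := Finset.mem_range.mp hk
      have hsum := sum_delay_le hK hc hρ0 hρ1 hM hp hinit (n := k) fun m hm => ih m (by omega)
      calc K * ρ ^ (n - k) * (c * ∑ j, U (k - p j))
          ≤ K * ρ ^ (n - k) * (c * (ℓ * (K * β ^ k * (ρ ^ pm)⁻¹ * M))) := by
            have : 0 ≤ K := by linarith
            gcongr
        _ = K * M * (β ^ k * ρ ^ (n - 1 - k) * (β - ρ)) := by
          rw [delayRate_sub_self, show n - k = n - 1 - k + 1 by omega, pow_succ]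
          ring
    calc U n ≤ K * ρ ^ n * M + ∑ k ∈ Finset.range n, K * ρ ^ (n - k) * (c * ∑ j, U (k - p j)) :=
          hrec n
      _ ≤ K * ρ ^ n * M + ∑ k ∈ Finset.range n, K * M * (β ^ k * ρ ^ (n - 1 - k) * (β - ρ)) := by
          grw [Finset.sum_le_sum hterm]
      _ = K * β ^ n * M := by
          rw [← Finset.mul_sum, ← Finset.sum_mul, geom_sum₂_mul]
          ring

end DelayGronwall

section ErrorEstimate

open Set

variable {q ℓ : ℕ} {ts : ℤ → ℝ} {A B X : ℝ → Mat q} {p : Fin ℓ → ℕ}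
  {F : ℝ → (Fin ℓ → Vec q) → Vec q} {y yt : ℝ → Vec q}

lemma IsSolNL.hasDerivAt_sub (hy : IsSolNL ts A B p F y) (hyt : HalfSolNL ts A B p F yt) {k : ℕ}
    {r : ℝ} (hr : r ∈ Ioo (ts k) (ts (k + 1))) :
    HasDerivAt (fun t => y t - yt t) (aMul (A r) (y r - yt r) +
      (aMul (B r) (y (ts k) - yt (ts k)) +
        (F r (fun j => y (ts (k - p j))) - F r (fun j => yt (ts (k - p j)))))) r := by
  have h := (hy.2 k r hr).sub (hyt.2 k k.cast_nonneg r hr)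
  rwa [show ∀ a b c a' b' c' : Vec q, a + b + c - (a' + b' + c') = a - a' + (b - b' + (c - c'))
    from fun _ _ _ _ _ _ => by abel, ← aMul_sub, ← aMul_sub] at h

lemma IsSolNL.norm_sub_sub_aMul_Zmat_le (hy : IsSolNL ts A B p F y)
    (hyt : HalfSolNL ts A B p F yt) (hts : Monotone ts) {θ : ℝ}
    (hgap : ∀ n, ts (n + 1) ≤ ts n + θ) (hX : IsFundamentalMatrix A X) (hB : Continuous B)
    {a : ℝ} (hA : ∀ t, ‖A t‖ ≤ a) (hFc : ∀ w, Continuous fun t => F t w) {L : ℝ} (hF : LipF L F)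
    {k : ℕ} {d : ℝ} (hd : d ∈ Icc (ts k) (ts (k + 1))) :
    ‖y d - yt d - aMul (Zmat X B ts k d) (y (ts k) - yt (ts k))‖ ≤
      Real.sqrt q * Real.exp (a * θ) * θ * L * ∑ j, ‖y (ts (k - p j)) - yt (ts (k - p j))‖ := by
  have hcont : ContinuousOn (fun t => y t - yt t) (Icc (ts k) d) :=
    hy.1.continuousOn.sub (hyt.1.mono fun t ht => (hts k.cast_nonneg).trans ht.1)
  have hstep := hX.eq_Zmat_add_integral hB ((hFc _).sub (hFc _)) hd.1 hcont
    fun r hr => hy.hasDerivAt_sub hyt ⟨hr.1, hr.2.trans_le hd.2⟩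
  rw [hstep, add_sub_cancel_left]
  refine (hX.norm_integral_XX_le hA (g := fun s => F s _ - F s _) (fun s => hF s _ _) hd.1
    (hd.2.trans (hgap k))).trans_eq ?_
  ring

end ErrorEstimate

section PerturbedStep

open Set

variable {q ℓ : ℕ} {ts : ℤ → ℝ} {Z : ℤ → ℝ → Mat q} {Φ : ℤ → Mat q} {K ρ c C M : ℝ}
  {p : Fin ℓ → ℕ} {pm : ℕ} {z : ℝ → Vec q}

lemma norm_le_of_perturbed_step (hts : Monotone ts) (hΦu : ∀ n : ℕ, IsUnit (Φ n))
    (hΦ : ∀ n : ℕ, Φ (n + 1) = Z n (ts (n + 1)) * Φ n) (hK : 1 ≤ K) (hρ0 : 0 < ρ) (hρ1 : ρ ≤ 1)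
    (hstab : ∀ n k : ℤ, k ≤ n → ‖Φ n * (Φ (k + 1))⁻¹‖ ≤ K * ρ ^ (n - k))
    (hp : ∀ j, p j ≤ pm) (hc : 0 ≤ c) (hZ : ∀ k : ℕ, ∀ d ∈ Icc (ts k) (ts (k + 1)), ‖Z k d‖ ≤ C)
    (hstep : ∀ k : ℕ, ∀ d ∈ Icc (ts k) (ts (k + 1)),
      ‖z d - aMul (Z k d) (z (ts k))‖ ≤ c * ∑ j, ‖z (ts (k - p j))‖)
    (hinit : ∀ m : ℤ, -pm ≤ m → m ≤ 0 → ‖z (ts m)‖ ≤ M) (n : ℕ) {r : ℝ}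
    (hr : r ∈ Icc (ts n) (ts (n + 1))) :
    ‖z r‖ ≤ K * (C + c * ℓ * (ρ ^ pm)⁻¹) * delayRate K c ℓ ρ pm ^ n * M := by
  set U : ℤ → ℝ := fun m => ‖z (ts m)‖
  set β := delayRate K c ℓ ρ pm
  have hM : 0 ≤ M := (norm_nonneg _).trans (hinit 0 (by simp) le_rfl)
  have hnode : ∀ k : ℕ, ts k ≤ ts (k + 1) := fun k => hts (by omega)
  have hrec : ∀ n : ℕ, U n ≤ K * ρ ^ n * M +
      ∑ k ∈ Finset.range n, K * ρ ^ (n - k) * (c * ∑ j, U (k - p j)) := fun n => by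
    refine (norm_le_of_discrete_variation (H := fun k => Z k (ts (k + 1))) hΦ hΦu
      (by linarith) hρ0.le hρ1 hstab (ζ := fun k => z (ts k))
      (r := fun k => z (ts (k + 1)) - aMul (Z k (ts (k + 1))) (z (ts k)))
      (fun k => by push_cast; abel) n).trans ?_
    gcongr with k hk
    · exact hinit 0 (by simp) le_rfl
    · exact hstep k _ ⟨hnode k, le_rfl⟩
  have hU := le_delayRate_pow_of_le_delay_sum hK hc hρ0 hρ1 hM hp hinit hrec
  have hdelay := sum_delay_le hK hc hρ0 hρ1 hM hp hinit (n := n) fun m _ => hU m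
  have hC : 0 ≤ C := (norm_nonneg _).trans (hZ n r hr)
  calc ‖z r‖ ≤ ‖aMul (Z n r) (z (ts n))‖ + ‖z r - aMul (Z n r) (z (ts n))‖ := norm_le_insert' _ _
    _ ≤ C * (K * β ^ n * M) + c * (ℓ * (K * β ^ n * (ρ ^ pm)⁻¹ * M)) := by
      gcongr
      · exact (norm_aMul_le _ _).trans (mul_le_mul (hZ n r hr) (hU n) (norm_nonneg _) hC)
      · exact (hstep n r hr).trans (by gcongr)
    _ = K * (C + c * ℓ * (ρ ^ pm)⁻¹) * β ^ n * M := by ring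

end PerturbedStep

section Decay

open Set

variable {ts : ℤ → ℝ} {θ β : ℝ}

lemma le_add_mul_of_forall_le_add (hgap : ∀ n, ts (n + 1) ≤ ts n + θ) (n : ℕ) :
    ts n ≤ ts 0 + n * θ := by
  induction n with
  | zero => simp
  | succ n ih => push_cast; linarith [hgap n]

lemma exists_nat_mem_Ico (htop : Tendsto ts atTop atTop) {r : ℝ} (hr : ts 0 ≤ r) :
    ∃ n : ℕ, r ∈ Ico (ts n) (ts (n + 1)) := by
  have hex : ∃ N : ℕ, r < ts N := by
    obtain ⟨N, hN⟩ := eventually_atTop.mp (htop.eventually_gt_atTop r)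
    exact ⟨N.toNat, hN _ (Int.self_le_toNat N)⟩
  have hpos : 0 < Nat.find hex := Nat.pos_of_ne_zero fun h => by
    have := Nat.find_spec hex
    rw [h] at this
    exact absurd hr (not_le.mpr (by simpa using this))
  refine ⟨Nat.find hex - 1, not_lt.mp (Nat.find_min hex (by omega)), ?_⟩
  have := Nat.find_spec hex
  rwa [← Nat.cast_succ, Nat.succ_eq_add_one, Nat.sub_add_cancel hpos]

lemma le_rpow_of_forall_mem_Ico (htop : Tendsto ts atTop atTop)
    (hgap : ∀ n, ts (n + 1) ≤ ts n + θ) (hθ : 0 < θ) (hβ0 : 0 < β) (hβ1 : β ≤ 1) {e : ℝ → ℝ}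
    {C : ℝ} (hC : 0 ≤ C) (h : ∀ n : ℕ, ∀ r ∈ Ico (ts n) (ts (n + 1)), e r ≤ C * β ^ n) {r : ℝ}
    (hr : ts 0 ≤ r) : e r ≤ C / (β * (β ^ θ⁻¹) ^ ts 0) * (β ^ θ⁻¹) ^ r := by
  set α := β ^ θ⁻¹
  have hα0 : 0 < α := Real.rpow_pos_of_pos hβ0 _
  obtain ⟨n, hn⟩ := exists_nat_mem_Ico htop hr
  have hrn : r ≤ ts 0 + ((n + 1 : ℕ) : ℝ) * θ :=
    hn.2.le.trans (by exact_mod_cast le_add_mul_of_forall_le_add hgap (n + 1))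
  have hαθ : α ^ θ = β := by rw [← Real.rpow_mul hβ0.le, inv_mul_cancel₀ hθ.ne', Real.rpow_one]
  have hpow : β ^ (n + 1) * α ^ ts 0 ≤ α ^ r := by
    calc β ^ (n + 1) * α ^ ts 0 = α ^ ts 0 * (α ^ θ) ^ ((n + 1 : ℕ) : ℝ) := by
          rw [hαθ, Real.rpow_natCast, mul_comm]
      _ = α ^ (ts 0 + ((n + 1 : ℕ) : ℝ) * θ) := by
          rw [Real.rpow_add hα0, mul_comm _ θ, Real.rpow_mul hα0.le]
      _ ≤ α ^ r :=
          Real.rpow_le_rpow_of_exponent_ge hα0 (Real.rpow_le_one hβ0.le hβ1 (by positivity)) hrn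
  calc e r ≤ C * β ^ n := h n r hn
    _ ≤ C / (β * α ^ ts 0) * α ^ r := by
      rw [div_mul_eq_mul_div, le_div_iff₀ (by positivity), mul_assoc]
      gcongr
      calc β ^ n * (β * α ^ ts 0) = β ^ (n + 1) * α ^ ts 0 := by ring
        _ ≤ α ^ r := hpow

lemma exists_rpow_stable_of_forall_mem_Ico {S : Type*} {P : S → Prop} {e : S → ℝ → ℝ}
    {M : S → ℝ} (htop : Tendsto ts atTop atTop) (hgap : ∀ n, ts (n + 1) ≤ ts n + θ) (hθ : 0 < θ)
    (hβ0 : 0 < β) (hβ1 : β < 1) {C : ℝ} (hC : 0 < C)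
    (h : ∀ s, P s → ∀ n : ℕ, ∀ r ∈ Ico (ts n) (ts (n + 1)), e s r ≤ C * β ^ n * M s) :
    ∃ α ∈ Ioo (0 : ℝ) 1, ∀ ε : ℝ, 0 < ε → ∃ δ : ℝ, 0 < δ ∧
      ∀ s, P s → M s ≤ δ → ∀ r : ℝ, ts 0 ≤ r → e s r ≤ ε * α ^ r := by
  refine ⟨β ^ θ⁻¹, ⟨Real.rpow_pos_of_pos hβ0 _, Real.rpow_lt_one hβ0.le hβ1 (inv_pos.mpr hθ)⟩,
    fun ε hε => ⟨ε * (β * (β ^ θ⁻¹) ^ ts 0) / C, by positivity, fun s hs hM r hr => ?_⟩⟩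
  refine (le_rpow_of_forall_mem_Ico htop hgap hθ hβ0 hβ1.le
    (C := C * (ε * (β * (β ^ θ⁻¹) ^ ts 0) / C)) (by positivity)
    (fun n r hr => (h s hs n r hr).trans ?_) hr).trans_eq ?_
  · rw [mul_right_comm]
    exact mul_le_mul_of_nonneg_right (mul_le_mul_of_nonneg_left hM hC.le) (by positivity)
  · field_simp

end Decay

lemma APR.exists_norm_le {E : Type*} [NormedAddCommGroup E] {g : ℝ → E} (hg : APR g) :
    ∃ C, ∀ t, ‖g t‖ ≤ C := by
  obtain ⟨l, -, hl⟩ := hg.2 1 one_pos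
  obtain ⟨C, hC⟩ := (isCompact_Icc (a := 0) (b := l)).exists_bound_of_continuousOn
    hg.1.continuousOn
  refine ⟨C + 1, fun t => ?_⟩
  obtain ⟨τ, hτ, hτl⟩ := hl (-t)
  have hmem : t + τ ∈ Set.Icc 0 l := ⟨by linarith [hτl.1], by linarith [hτl.2]⟩
  calc ‖g t‖ ≤ ‖g (t + τ)‖ + ‖g (t + τ) - g t‖ := norm_le_insert _ _
    _ ≤ C + 1 := add_le_add (hC _ hmem) (hτ t)

lemma le_sup'_range_neg {g : ℤ → ℝ} {pm : ℕ} {m : ℤ} (h₁ : -pm ≤ m) (h₂ : m ≤ 0) :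
    g m ≤ (Finset.range (pm + 1)).sup' Finset.nonempty_range_add_one fun j => g (-j) :=
  Finset.le_sup'_of_le _ (b := m.natAbs) (Finset.mem_range.mpr (by omega)) (by
    rw [Int.natCast_natAbs, abs_of_nonpos h₂, neg_neg])

lemma IsSolNL.exists_forall_halfSolNL_norm_sub_le {q ℓ : ℕ} {ts : ℤ → ℝ} {A B X : ℝ → Mat q}
    {p : Fin ℓ → ℕ} {F : ℝ → (Fin ℓ → Vec q) → Vec q} {y : ℝ → Vec q}
    (hy : IsSolNL ts A B p F y) (hts : Monotone ts) {θ : ℝ} (hgap : ∀ n, ts (n + 1) ≤ ts n + θ)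
    (hX : IsFundamentalMatrix A X) (hB : Continuous B) {a b : ℝ} (hA : ∀ t, ‖A t‖ ≤ a)
    (hBb : ∀ t, ‖B t‖ ≤ b) (hFc : ∀ w, Continuous fun t => F t w) {L : ℝ} (hF : LipF L F)
    {Φ : ℤ → Mat q} (hΦu : ∀ n : ℕ, IsUnit (Φ n))
    (hΦ : ∀ n : ℕ, Φ (n + 1) = Zmat X B ts n (ts (n + 1)) * Φ n) {K ρ : ℝ} (hK : 1 ≤ K)
    (hρ0 : 0 < ρ) (hρ1 : ρ ≤ 1)
    (hstab : ∀ n k : ℤ, k ≤ n → ‖Φ n * (Φ (k + 1))⁻¹‖ ≤ K * ρ ^ (n - k)) {pm : ℕ}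
    (hp : ∀ j, p j ≤ pm) (hL : 0 ≤ L) :
    ∃ C, 0 < C ∧ ∀ yt, HalfSolNL ts A B p F yt → ∀ n : ℕ, ∀ r ∈ Set.Ico (ts n) (ts (n + 1)),
      ‖y r - yt r‖ ≤ C * delayRate K (Real.sqrt q * Real.exp (a * θ) * θ * L) ℓ ρ pm ^ n *
        (Finset.range (pm + 1)).sup' Finset.nonempty_range_add_one
          fun j => ‖y (ts (-(j : ℤ))) - yt (ts (-(j : ℤ)))‖ := by
  set c := Real.sqrt q * Real.exp (a * θ) * θ * L
  have hc : 0 ≤ c := by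
    have hθ : 0 ≤ θ := by linarith [hgap 0, hts (show (0 : ℤ) ≤ 0 + 1 by norm_num)]
    positivity
  refine ⟨max (K * (Real.sqrt q * Real.exp (a * θ) *
    (Real.sqrt q + Real.sqrt q * Real.exp (a * θ) * b * θ) + c * ℓ * (ρ ^ pm)⁻¹)) 1,
    lt_max_of_lt_right one_pos, fun yt hyt n r hr => ?_⟩
  have hinit : ∀ m : ℤ, -pm ≤ m → m ≤ 0 → ‖y (ts m) - yt (ts m)‖ ≤
      (Finset.range (pm + 1)).sup' Finset.nonempty_range_add_one
        fun j => ‖y (ts (-(j : ℤ))) - yt (ts (-(j : ℤ)))‖ := fun m h₁ h₂ =>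
    le_sup'_range_neg (g := fun m => ‖y (ts m) - yt (ts m)‖) h₁ h₂
  refine (norm_le_of_perturbed_step (z := fun t => y t - yt t) hts hΦu hΦ hK hρ0 hρ1 hstab hp hc
    (fun k d hd => hX.norm_Zmat_le hA hBb hd.1 (hd.2.trans (hgap k)))
    (fun k d hd => hy.norm_sub_sub_aMul_Zmat_le hyt hts hgap hX hB hA hFc hF hd) hinit n
    (Set.Ico_subset_Icc_self hr)).trans ?_
  have hM := (norm_nonneg _).trans (hinit 0 (by simp) le_rfl)
  gcongr
  · exact pow_nonneg (hρ0.le.trans (le_delayRate (by linarith) hc hρ0.le)) n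
  · exact le_max_left _ (1 : ℝ)

/-- exponential stability of the almost periodic solution of the nonlinear
DEPCAG when the difference equation `φ(n+1) = H(n)φ(n)` is exponentially stable
(`‖Φ(n)Φ(k+1)⁻¹‖ ≤ Kρ^{n−k}` for `n ≥ k`): every half-line solution `ỹ` satisfies
`‖y(t) − ỹ(t)‖ ≤ K̃ (ρ(1+KL'ℓρ^{−p}))ⁿ max_{0≤j≤p}‖y(t_{−j}) − ỹ(t_{−j})‖` on
`[t_n, t_{n+1})`, and if moreover `KL'ℓ/(1−ρ) < ρ^{p−1}` then `y` is exponentially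
stable as `t → +∞`. -/
theorem nonlinear_depcag_exponential_stability {q ℓ : ℕ}
    (ts : ℤ → ℝ) (hts : StrictMono ts)
    (htop : Tendsto ts atTop atTop)
    (θ : ℝ) (hθ : IsLUB (Set.range fun n : ℤ => ts (n + 1) - ts n) θ)
    (A B : ℝ → Mat q) (hA : APR A) (hB : APR B)
    (X : ℝ → Mat q) (hX : ∀ t : ℝ, HasDerivAt X (A t * X t) t)
    (hXinv : ∀ t : ℝ, IsUnit (X t))
    (Φ : ℤ → Mat q) (hΦinv : ∀ n : ℤ, IsUnit (Φ n))
    (hΦ : ∀ n : ℤ, Φ (n + 1) = Zmat X B ts n (ts (n + 1)) * Φ n)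
    (K ρ : ℝ) (hK : 1 ≤ K) (hρ0 : 0 < ρ) (hρ1 : ρ < 1)
    (hstab : ∀ n k : ℤ, k ≤ n → ‖Φ n * (Φ (k + 1))⁻¹‖ ≤ K * ρ ^ (n - k))
    (p : Fin ℓ → ℕ)
    (pm : ℕ) (hpm : IsGreatest (Set.range p) pm)
    (L : ℝ) (hL : 0 < L)
    (F : ℝ → (Fin ℓ → Vec q) → Vec q) (hFap : UnifAPR F) (hFlip : LipF L F)
    (L' : ℝ) (hL' : L' = Real.sqrt q * Real.exp ((⨆ t : ℝ, ‖A t‖) * θ) * θ * L)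
    (y : ℝ → Vec q) (hysol : IsSolNL ts A B p F y) :
    (∃ Kt : ℝ, 0 < Kt ∧
      ∀ yt : ℝ → Vec q, HalfSolNL ts A B p F yt →
        ∀ n : ℕ, ∀ r ∈ Set.Ico (ts n) (ts (n + 1)),
          ‖y r - yt r‖ ≤ Kt * (ρ * (1 + K * L' * ℓ * (ρ ^ pm)⁻¹)) ^ n *
            ((Finset.range (pm + 1)).sup' (by simp)
              fun j => ‖y (ts (-(j : ℤ))) - yt (ts (-(j : ℤ)))‖)) ∧
    (K * L' * ℓ / (1 - ρ) < ρ ^ (pm - 1) →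
      ∃ α ∈ Set.Ioo (0 : ℝ) 1, ∀ ε : ℝ, 0 < ε → ∃ δ : ℝ, 0 < δ ∧
        ∀ yt : ℝ → Vec q, HalfSolNL ts A B p F yt →
          ((Finset.range (pm + 1)).sup' (by simp)
            fun j => ‖y (ts (-(j : ℤ))) - yt (ts (-(j : ℤ)))‖) ≤ δ →
          ∀ r : ℝ, ts 0 ≤ r → ‖yt r - y r‖ ≤ ε * Real.rpow α r) := by
  subst hL'
  have hgap : ∀ n, ts (n + 1) ≤ ts n + θ := fun n => by linarith [hθ.1 ⟨n, rfl⟩]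
  have hθ0 : 0 < θ := (sub_pos.mpr (hts (lt_add_one 0))).trans_le (hθ.1 ⟨0, rfl⟩)
  have hAa : ∀ t, ‖A t‖ ≤ ⨆ t, ‖A t‖ :=
    le_ciSup (hA.exists_norm_le.imp fun _ h => Set.forall_mem_range.mpr h)
  obtain ⟨b, hb⟩ := hB.exists_norm_le
  have hc : 0 ≤ Real.sqrt q * Real.exp ((⨆ t, ‖A t‖) * θ) * θ * L := by positivity
  obtain ⟨Kt, hKt, hbound⟩ := hysol.exists_forall_halfSolNL_norm_sub_le hts.monotone hgap
    ⟨hX, hXinv⟩ hB.1 hAa hb (fun w => hFap.1.comp (continuous_id.prodMk continuous_const)) hFlip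
    (fun n => hΦinv n) (fun n => hΦ n) hK hρ0 hρ1.le hstab (fun j => hpm.2 ⟨j, rfl⟩) hL.le
  refine ⟨⟨Kt, hKt, hbound⟩, fun hsmall => ?_⟩
  exact exists_rpow_stable_of_forall_mem_Ico htop hgap hθ0
    (hρ0.trans_le (le_delayRate (by linarith) hc hρ0.le)) (delayRate_lt_one hρ0 hρ1 hsmall) hKt
    fun yt hyt n r hr => (norm_sub_rev _ _).trans_le (hbound yt hyt n r hr)
end
end

section
/- Assume the family (t_n^{(k)}) is equipotentially almost periodic and f_1, f_2 : ℝ → ℂ^q both satisfy (H3). Then for every ε > 0 the set Γ_ε ∩ T(f_1, ε) ∩ T(f_2, ε) is relatively dense in ℝ. -/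
open Filter

noncomputable section

/-- The `(H3)` translation set of a (possibly discontinuous) function `f`. -/
def Tset {E : Type*} [NormedAddCommGroup E] (ts : ℤ → ℝ) (f : ℝ → E) (ε : ℝ) : Set ℝ :=
  {τ : ℝ | ∀ s : ℝ, (∀ n : ℤ, s ∉ Set.Ioo (ts n - ε) (ts n + ε)) → ‖f (s + τ) - f s‖ ≤ ε}

/-- Hypothesis `(H3)`: almost periodicity for piecewise continuous functions. -/
def H3cond {E : Type*} [NormedAddCommGroup E] (ts : ℤ → ℝ) (f : ℝ → E) : Prop :=
  ∀ ε : ℝ, 0 < ε → RelDenseR (Tset ts f ε) ∧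
    ∃ δ : ℝ, 0 < δ ∧ ∀ τ' : ℝ, |τ'| ≤ δ → ∀ n : ℤ, ∀ s : ℝ,
      s ∈ Set.Icc (ts n) (ts (n + 1)) → s + τ' ∈ Set.Icc (ts n) (ts (n + 1)) →
      ‖f (s + τ') - f s‖ ≤ ε

/-- `Γ_ε`: the set of `r ∈ ℝ` with `sup_n |t_n^{(k)} - r| ≤ ε` for some `k`. -/
def GammaSet (ts : ℤ → ℝ) (ε : ℝ) : Set ℝ :=
  {r : ℝ | ∃ k : ℤ, ∀ n : ℤ, |ts (n + k) - ts n - r| ≤ ε}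

/-- `P_r(ε)`: the set of `k ∈ ℤ` with `sup_n |t_n^{(k)} - r| ≤ ε`. -/
def PkSet (ts : ℤ → ℝ) (ε : ℝ) (r : ℝ) : Set ℤ :=
  {k : ℤ | ∀ n : ℤ, |ts (n + k) - ts n - r| ≤ ε}


private lemma not_mem_Ioo_abs {s a ε : ℝ} (h : s ∉ Set.Ioo (a - ε) (a + ε)) :
    ε ≤ |s - a| := by
  rw [Set.mem_Ioo, not_and_or, not_lt, not_lt] at h
  rcases h with h | h
  · rw [le_abs]; right; linarith
  · rw [le_abs]; left; linarith

private lemma abs_not_mem_Ioo {s a η : ℝ} (h : η ≤ |s - a|) :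
    s ∉ Set.Ioo (a - η) (a + η) := by
  rw [Set.mem_Ioo, not_and_or, not_lt, not_lt]
  rcases le_abs.mp h with h | h
  · right; linarith
  · left; linarith

private lemma margin_helper {A B C e g d : ℝ} (hA : e ≤ |A|) (hB : |B| ≤ g) (hC : |C| ≤ d) :
    e - g - d ≤ |A - B + C| := by
  rw [abs_le] at hB hC
  rcases le_abs.mp hA with h | h
  · rw [le_abs]; left; linarith
  · rw [le_abs]; right; linarith

private lemma exists_index (ts : ℤ → ℝ) (hts : StrictMono ts)
    (htop : Tendsto ts atTop atTop) (hbot : Tendsto ts atBot atBot) (y : ℝ) :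
    ∃ m : ℤ, ts m ≤ y ∧ y < ts (m + 1) := by
  obtain ⟨j, hj⟩ := (hbot.eventually (eventually_le_atBot y)).exists
  obtain ⟨J, hJ⟩ := (htop.eventually (eventually_gt_atTop y)).exists
  obtain ⟨m, hm, hmax⟩ := Int.exists_greatest_of_bdd
    (⟨J, fun z hz => by
      by_contra hc; push_neg at hc
      have := hts.monotone hc.le
      linarith⟩ : ∃ b : ℤ, ∀ z : ℤ, ts z ≤ y → z ≤ b) ⟨j, hj⟩
  refine ⟨m, hm, ?_⟩
  by_contra h; push_neg at h
  have := hmax _ h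
  omega

private lemma iter_gap (ts : ℤ → ℝ) {M : ℝ} (hM : ∀ n : ℤ, ts (n + 1) ≤ ts n + M) :
    ∀ (d : ℕ) (a : ℤ), ts (a + d) ≤ ts a + d * M := by
  intro d
  induction d with
  | zero => intro a; simp
  | succ d ih =>
    intro a
    have he : (a + ((d : ℕ) + 1 : ℕ) : ℤ) = (a + d) + 1 := by push_cast; ring
    rw [he]
    have h1 := hM (a + d)
    have h2 := ih a
    push_cast
    linarith

private lemma floor_close {δ : ℝ} (hδ : 0 < δ) {a b : ℝ} (h : ⌊a / δ⌋ = ⌊b / δ⌋) :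
    |a - b| ≤ δ := by
  have ha1 : (⌊a / δ⌋ : ℝ) * δ ≤ a := (le_div_iff₀ hδ).mp (Int.floor_le _)
  have ha2 : a < ((⌊a / δ⌋ : ℝ) + 1) * δ := (div_lt_iff₀ hδ).mp (Int.lt_floor_add_one _)
  have hb1 : (⌊b / δ⌋ : ℝ) * δ ≤ b := (le_div_iff₀ hδ).mp (Int.floor_le _)
  have hb2 : b < ((⌊b / δ⌋ : ℝ) + 1) * δ := (div_lt_iff₀ hδ).mp (Int.lt_floor_add_one _)
  rw [h] at ha1 ha2
  rw [abs_le]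
  constructor <;> nlinarith


/-- if `(t_n^{(k)})` is equipotentially almost periodic and `f₁, f₂`
satisfy `(H3)`, then `Γ_ε ∩ T(f₁, ε) ∩ T(f₂, ε)` is relatively dense. -/
theorem gamma_inter_two_translation_sets_relatively_dense {q : ℕ} (hq : 1 ≤ q)
    (ts : ℤ → ℝ) (hts : StrictMono ts)
    (htop : Tendsto ts atTop atTop) (hbot : Tendsto ts atBot atBot)
    (hEqui : EquiAP ts)
    (f₁ f₂ : ℝ → Vec q)
    (hf₁loc : MeasureTheory.LocallyIntegrable f₁)
    (hf₂loc : MeasureTheory.LocallyIntegrable f₂)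
    (hf₁ : H3cond ts f₁) (hf₂ : H3cond ts f₂) :
    ∀ ε : ℝ, 0 < ε →
      RelDenseR (GammaSet ts ε ∩ Tset ts f₁ ε ∩ Tset ts f₂ ε) := by
  intro ε hε
  classical
  obtain ⟨lZ, hlZ, hEZ⟩ := hEqui (ε/8) (by linarith)
  have hP : ∀ T : ℤ, (∀ k n : ℤ, |(ts (T + n + k) - ts (T + n)) - (ts (n + k) - ts n)| ≤ ε/8) →
      ∀ j : ℤ, |ts (j + T) - ts j - (ts T - ts 0)| ≤ ε/8 := by
    intro T hT j
    have h := hT j 0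
    rw [show T + (0:ℤ) + j = j + T by ring, show T + (0:ℤ) = T by ring,
        show (0:ℤ) + j = j by ring] at h
    have e : ts (j + T) - ts j - (ts T - ts 0) = ts (j + T) - ts T - (ts j - ts 0) := by ring
    rw [e]
    exact h
  obtain ⟨Tp, hTpE, hTpI⟩ := hEZ 1
  simp only [Set.mem_setOf_eq] at hTpE
  have hTp1 : (1:ℤ) ≤ Tp := hTpI.1
  set M : ℝ := ts Tp - ts 0 + ε/8 with hM
  have hM0 : 0 < M := by
    have : ts 0 < ts Tp := hts (by omega)
    rw [hM]; linarith
  have hgap : ∀ n : ℤ, ts (n + 1) ≤ ts n + M := by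
    intro n
    have h1 : ts (n + 1) ≤ ts (n + Tp) := hts.monotone (by omega)
    have h2 := (abs_le.mp (hP Tp hTpE n)).2
    rw [hM]; linarith
  set lR : ℝ := M * (1 + (lZ : ℝ)) with hlR
  have hlZR : (0:ℝ) < 1 + (lZ:ℝ) := by exact_mod_cast (by omega : (0:ℤ) < 1 + lZ)
  have hlR0 : 0 < lR := by rw [hlR]; exact mul_pos hM0 hlZR
  have hRdense : ∀ x : ℝ, ∃ T : ℤ,
      (∀ j : ℤ, |ts (j + T) - ts j - (ts T - ts 0)| ≤ ε/8) ∧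
      x ≤ ts T - ts 0 ∧ ts T - ts 0 ≤ x + lR := by
    intro x
    obtain ⟨j, hj1, hj2⟩ := exists_index ts hts htop hbot (ts 0 + x)
    obtain ⟨T, hTE, hTI⟩ := hEZ (j + 1)
    simp only [Set.mem_setOf_eq] at hTE
    have hT1 : j + 1 ≤ T := hTI.1
    have hT2 : T ≤ j + 1 + lZ := hTI.2
    refine ⟨T, hP T hTE, ?_, ?_⟩
    · have : ts (j + 1) ≤ ts T := hts.monotone hT1
      linarith
    · have hiter := iter_gap ts hgap (T - (j + 1)).toNat (j + 1)
      rw [show (j + 1) + ((T - (j + 1)).toNat : ℤ) = T by omega] at hiter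
      have hcast : ((T - (j + 1)).toNat : ℝ) ≤ (lZ : ℝ) := by
        exact_mod_cast (by omega : ((T - (j+1)).toNat : ℤ) ≤ lZ)
      have hmul : ((T - (j + 1)).toNat : ℝ) * M ≤ (lZ : ℝ) * M :=
        mul_le_mul_of_nonneg_right hcast hM0.le
      have hg := hgap j
      have hring : lR = M + (lZ:ℝ) * M := by rw [hlR]; ring
      linarith
  obtain ⟨l₁, hl₁, hA1d⟩ := (hf₁ (ε/4) (by linarith)).1
  obtain ⟨l₂, hl₂, hA2d⟩ := (hf₂ (ε/4) (by linarith)).1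
  obtain ⟨δ₁, hδ₁, hH₁⟩ := (hf₁ (ε/2) (by linarith)).2
  obtain ⟨δ₂, hδ₂, hH₂⟩ := (hf₂ (ε/2) (by linarith)).2
  set δ : ℝ := min (min δ₁ δ₂) (ε/8) with hδdef
  have hδ : 0 < δ := lt_min (lt_min hδ₁ hδ₂) (by linarith)
  have hδa : δ ≤ δ₁ := le_trans (min_le_left _ _) (min_le_left _ _)
  have hδb : δ ≤ δ₂ := le_trans (min_le_left _ _) (min_le_right _ _)
  have hδc : δ ≤ ε/8 := min_le_right _ _
  have hch : ∀ x : ℝ, ∃ (T : ℤ) (a₁ a₂ : ℝ),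
      (∀ j : ℤ, |ts (j + T) - ts j - (ts T - ts 0)| ≤ ε/8) ∧
      x ≤ ts T - ts 0 ∧ ts T - ts 0 ≤ x + lR ∧
      a₁ ∈ Tset ts f₁ (ε/4) ∧ x ≤ a₁ ∧ a₁ ≤ x + l₁ ∧
      a₂ ∈ Tset ts f₂ (ε/4) ∧ x ≤ a₂ ∧ a₂ ≤ x + l₂ := by
    intro x
    obtain ⟨T, h1, h2, h3⟩ := hRdense x
    obtain ⟨a₁, ha₁, ha₁I⟩ := hA1d x
    obtain ⟨a₂, ha₂, ha₂I⟩ := hA2d x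
    exact ⟨T, a₁, a₂, h1, h2, h3, ha₁, ha₁I.1, ha₁I.2, ha₂, ha₂I.1, ha₂I.2⟩
  choose RT A₁ A₂ hRP hRlo hRhi hT₁ hA₁lo hA₁hi hT₂ hA₂lo hA₂hi using hch
  simp only [Tset, Set.mem_setOf_eq] at hT₁ hT₂
  set cell : ℝ → ℤ × ℤ := fun x =>
    (⌊(A₁ x - (ts (RT x) - ts 0)) / δ⌋, ⌊(A₂ x - (ts (RT x) - ts 0)) / δ⌋) with hcell
  set F : Finset (ℤ × ℤ) :=
    (Finset.Icc ⌊(-lR) / δ⌋ ⌊l₁ / δ⌋) ×ˢ (Finset.Icc ⌊(-lR) / δ⌋ ⌊l₂ / δ⌋) with hF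
  have hcF : ∀ x : ℝ, cell x ∈ F := by
    intro x
    have k1lo : -lR ≤ A₁ x - (ts (RT x) - ts 0) := by
      have := hA₁lo x; have := hRhi x; linarith
    have k1hi : A₁ x - (ts (RT x) - ts 0) ≤ l₁ := by
      have := hA₁hi x; have := hRlo x; linarith
    have k2lo : -lR ≤ A₂ x - (ts (RT x) - ts 0) := by
      have := hA₂lo x; have := hRhi x; linarith
    have k2hi : A₂ x - (ts (RT x) - ts 0) ≤ l₂ := by
      have := hA₂hi x; have := hRlo x; linarith
    rw [hcell, hF]
    refine Finset.mem_product.mpr ⟨Finset.mem_Icc.mpr ⟨?_, ?_⟩, Finset.mem_Icc.mpr ⟨?_, ?_⟩⟩ <;>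
      apply Int.floor_mono <;> gcongr
  have hrepex : ∀ p : ℤ × ℤ, ∃ y : ℝ, (∃ x : ℝ, cell x = p) → cell y = p := by
    intro p
    by_cases h : ∃ x : ℝ, cell x = p
    · exact ⟨h.choose, fun _ => h.choose_spec⟩
    · exact ⟨0, fun hh => absurd hh h⟩
  choose rep hrep using hrepex
  have hFne : F.Nonempty := ⟨cell 0, hcF 0⟩
  set C₂ : ℝ := F.sup' hFne (fun p => ts (RT (rep p)) - ts 0) with hC₂
  set C₁ : ℝ := F.inf' hFne (fun p => ts (RT (rep p)) - ts 0) with hC₁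
  have hC2b : ∀ x : ℝ, ts (RT (rep (cell x))) - ts 0 ≤ C₂ :=
    fun x => Finset.le_sup' (f := fun p => ts (RT (rep p)) - ts 0) (hcF x)
  have hC1b : ∀ x : ℝ, C₁ ≤ ts (RT (rep (cell x))) - ts 0 :=
    fun x => Finset.inf'_le (f := fun p => ts (RT (rep p)) - ts 0) (hcF x)
  refine ⟨lR + (C₂ - C₁), by have := (hC1b 0).trans (hC2b 0); linarith, ?_⟩
  intro m
  set x : ℝ := m + C₂ with hx
  set x' : ℝ := rep (cell x) with hx'
  have hcc : cell x' = cell x := hrep (cell x) ⟨x, rfl⟩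
  have hccpair := hcc
  rw [hcell] at hccpair
  simp only [Prod.mk.injEq] at hccpair
  have hsync₁ : |(A₁ x - A₁ x') - (ts (RT x) - ts (RT x'))| ≤ δ := by
    have e : (A₁ x - A₁ x') - (ts (RT x) - ts (RT x')) =
        -((A₁ x' - (ts (RT x') - ts 0)) - (A₁ x - (ts (RT x) - ts 0))) := by ring
    rw [e, abs_neg]
    exact floor_close hδ hccpair.1
  have hsync₂ : |(A₂ x - A₂ x') - (ts (RT x) - ts (RT x'))| ≤ δ := by
    have e : (A₂ x - A₂ x') - (ts (RT x) - ts (RT x')) =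
        -((A₂ x' - (ts (RT x') - ts 0)) - (A₂ x - (ts (RT x) - ts 0))) := by ring
    rw [e, abs_neg]
    exact floor_close hδ hccpair.2
  have hΓ : ∀ n : ℤ, |ts (n + (RT x - RT x')) - ts n - (ts (RT x) - ts (RT x'))| ≤ ε/4 := by
    intro n
    have h1 := hRP x (n - RT x')
    have h2 := hRP x' (n - RT x')
    rw [show (n - RT x') + RT x' = n by ring] at h2
    rw [show (n - RT x') + RT x = n + (RT x - RT x') by ring] at h1
    rw [abs_le] at h1 h2 ⊢
    constructor <;> linarith
  have main : ∀ (f : ℝ → Vec q) (A : ℝ → ℝ) (δf : ℝ), δ ≤ δf →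
      (∀ y : ℝ, ∀ s : ℝ, (∀ n : ℤ, s ∉ Set.Ioo (ts n - ε/4) (ts n + ε/4)) →
        ‖f (s + A y) - f s‖ ≤ ε/4) →
      (∀ τ' : ℝ, |τ'| ≤ δf → ∀ n : ℤ, ∀ s : ℝ, s ∈ Set.Icc (ts n) (ts (n+1)) →
        s + τ' ∈ Set.Icc (ts n) (ts (n+1)) → ‖f (s + τ') - f s‖ ≤ ε/2) →
      |(A x - A x') - (ts (RT x) - ts (RT x'))| ≤ δ →
      ∀ s : ℝ, (∀ n : ℤ, s ∉ Set.Ioo (ts n - ε) (ts n + ε)) →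
        ‖f (s + (ts (RT x) - ts (RT x'))) - f s‖ ≤ ε := by
    intro f A δf hδf hTs hHd hsync s hs
    have habs : ∀ n : ℤ, ε ≤ |s - ts n| := fun n => not_mem_Ioo_abs (hs n)
    have hsη : ∀ n : ℤ, s ∉ Set.Ioo (ts n - ε/4) (ts n + ε/4) :=
      fun n => abs_not_mem_Ioo (le_trans (by linarith) (habs n))
    have hρm : ∀ n : ℤ, ε - ε/4 ≤ |s + (ts (RT x) - ts (RT x')) - ts n| := by
      intro n
      have h1 := habs (n - (RT x - RT x'))
      have h2 := hΓ (n - (RT x - RT x'))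
      rw [show (n - (RT x - RT x')) + (RT x - RT x') = n by ring] at h2
      have h3 := margin_helper h1 h2 (le_of_eq (abs_zero) : |(0:ℝ)| ≤ 0)
      calc ε - ε/4 = ε - ε/4 - 0 := by ring
        _ ≤ |(s - ts (n - (RT x - RT x'))) -
              (ts n - ts (n - (RT x - RT x')) - (ts (RT x) - ts (RT x'))) + 0| := h3
        _ = |s + (ts (RT x) - ts (RT x')) - ts n| := by congr 1; ring
    have hwm : ∀ n : ℤ, ε/4 ≤ |s + (A x - A x') - ts n| := by
      intro n
      have h1 := habs (n - (RT x - RT x'))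
      have h2 := hΓ (n - (RT x - RT x'))
      rw [show (n - (RT x - RT x')) + (RT x - RT x') = n by ring] at h2
      have h3 := margin_helper h1 h2 hsync
      calc ε/4 ≤ ε - ε/4 - δ := by linarith
        _ ≤ |(s - ts (n - (RT x - RT x'))) -
              (ts n - ts (n - (RT x - RT x')) - (ts (RT x) - ts (RT x'))) +
              ((A x - A x') - (ts (RT x) - ts (RT x')))| := h3
        _ = |s + (A x - A x') - ts n| := by congr 1; ring
    have h1 : ‖f (s + A x) - f s‖ ≤ ε/4 := hTs x s hsη
    have hwη : ∀ n : ℤ, (s + (A x - A x')) ∉ Set.Ioo (ts n - ε/4) (ts n + ε/4) :=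
      fun n => abs_not_mem_Ioo (hwm n)
    have h2 : ‖f ((s + (A x - A x')) + A x') - f (s + (A x - A x'))‖ ≤ ε/4 := hTs x' _ hwη
    rw [show (s + (A x - A x')) + A x' = s + A x by ring] at h2
    obtain ⟨mm, hm1, hm2⟩ := exists_index ts hts htop hbot (s + (ts (RT x) - ts (RT x')))
    have hmar1 : ts mm + (ε - ε/4) ≤ s + (ts (RT x) - ts (RT x')) := by
      rcases le_abs.mp (hρm mm) with h | h
      · linarith
      · linarith
    have hmar2 : s + (ts (RT x) - ts (RT x')) ≤ ts (mm+1) - (ε - ε/4) := by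
      rcases le_abs.mp (hρm (mm+1)) with h | h
      · linarith
      · linarith
    have hsyncle := abs_le.mp hsync
    have hwI : s + (A x - A x') ∈ Set.Icc (ts mm) (ts (mm+1)) := by
      constructor
      · have := hsyncle.1; linarith
      · have := hsyncle.2; linarith
    have hρI : (s + (A x - A x')) + ((ts (RT x) - ts (RT x')) - (A x - A x'))
        ∈ Set.Icc (ts mm) (ts (mm+1)) := by
      rw [show (s + (A x - A x')) + ((ts (RT x) - ts (RT x')) - (A x - A x')) =
        s + (ts (RT x) - ts (RT x')) by ring]
      exact ⟨by linarith, by linarith⟩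
    have habssync : |(ts (RT x) - ts (RT x')) - (A x - A x')| ≤ δf := by
      rw [abs_sub_comm]; exact hsync.trans hδf
    have h3 := hHd ((ts (RT x) - ts (RT x')) - (A x - A x')) habssync mm
      (s + (A x - A x')) hwI hρI
    rw [show (s + (A x - A x')) + ((ts (RT x) - ts (RT x')) - (A x - A x')) =
      s + (ts (RT x) - ts (RT x')) by ring] at h3
    rw [show f (s + (ts (RT x) - ts (RT x'))) - f s =
      ((f (s + (ts (RT x) - ts (RT x'))) - f (s + (A x - A x'))) -
        (f (s + A x) - f (s + (A x - A x')))) + (f (s + A x) - f s) by abel]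
    refine le_trans (norm_add_le _ _) ?_
    have t2 := norm_sub_le (f (s + (ts (RT x) - ts (RT x'))) - f (s + (A x - A x')))
      (f (s + A x) - f (s + (A x - A x')))
    linarith
  have hG : (ts (RT x) - ts (RT x')) ∈ GammaSet ts ε := by
    simp only [GammaSet, Set.mem_setOf_eq]
    exact ⟨RT x - RT x', fun n => le_trans (hΓ n) (by linarith)⟩
  have hmem1 : (ts (RT x) - ts (RT x')) ∈ Tset ts f₁ ε := by
    simp only [Tset, Set.mem_setOf_eq]
    exact main f₁ A₁ δ₁ hδa hT₁ hH₁ hsync₁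
  have hmem2 : (ts (RT x) - ts (RT x')) ∈ Tset ts f₂ ε := by
    simp only [Tset, Set.mem_setOf_eq]
    exact main f₂ A₂ δ₂ hδb hT₂ hH₂ hsync₂
  have hb1 := hRlo x
  have hb2 := hRhi x
  have hb3 : C₁ ≤ ts (RT x') - ts 0 := by rw [hx']; exact hC1b x
  have hb4 : ts (RT x') - ts 0 ≤ C₂ := by rw [hx']; exact hC2b x
  exact ⟨ts (RT x) - ts (RT x'), ⟨⟨hG, hmem1⟩, hmem2⟩,
    ⟨by rw [hx] at hb1; linarith, by rw [hx] at hb2; linarith⟩⟩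
end
end

section
/- Assume the family (t_n^{(k)}) is equipotentially almost periodic and g_1, g_2 : ℤ → ℂ^q are almost periodic sequences. Then for every ε > 0 the set P_ε ∩ T(g_1, ε) ∩ T(g_2, ε) is relatively dense in ℤ. -/
open Filter

noncomputable section

/-- `P_ε = ⋃_{r ∈ Γ_ε} P_r(ε)`. -/
def PESet (ts : ℤ → ℝ) (ε : ℝ) : Set ℤ := ⋃ r ∈ GammaSet ts ε, PkSet ts ε r

lemma relDenseZ_mono {E F : Set ℤ} (h : E ⊆ F) (hE : RelDenseZ E) : RelDenseZ F := by
  obtain ⟨l, hl, hm⟩ := hE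
  exact ⟨l, hl, fun m => (hm m).imp fun x hx => ⟨h hx.1, hx.2⟩⟩

/-- Approximation of arbitrary shifts by shifts in a bounded window. -/
lemma approx_aux (D : ℤ → ℤ → ℝ → Prop)
    (shift : ∀ τ σ p ε, D τ σ ε → D (τ + p) (σ + p) ε)
    (ε : ℝ) (l : ℤ)
    (hd : ∀ m : ℤ, ({τ | D τ 0 ε} ∩ Set.Icc m (m + l)).Nonempty) :
    ∀ τ : ℤ, ∃ s : ℤ, 0 ≤ s ∧ s ≤ l ∧ D τ s ε := by
  intro τ
  obtain ⟨p, hp, hp2⟩ := hd (τ - l)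
  rw [Set.mem_Icc] at hp2
  refine ⟨τ - p, by omega, by omega, ?_⟩
  have h := shift p 0 (τ - p) ε hp
  have e1 : p + (τ - p) = τ := by ring
  have e2 : (0 : ℤ) + (τ - p) = τ - p := by ring
  rwa [e1, e2] at h

/-- Common almost periods of two "almost periodic discrepancy relations" are
relatively dense. -/
lemma key_lemma (D₁ D₂ : ℤ → ℤ → ℝ → Prop)
    (tri₁ : ∀ τ a σ ε δ, D₁ τ a ε → D₁ a σ δ → D₁ τ σ (ε + δ))
    (shift₁ : ∀ τ σ p ε, D₁ τ σ ε → D₁ (τ + p) (σ + p) ε)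
    (symm₁ : ∀ τ σ ε, D₁ τ σ ε → D₁ σ τ ε)
    (dense₁ : ∀ ε : ℝ, 0 < ε → RelDenseZ {τ | D₁ τ 0 ε})
    (tri₂ : ∀ τ a σ ε δ, D₂ τ a ε → D₂ a σ δ → D₂ τ σ (ε + δ))
    (shift₂ : ∀ τ σ p ε, D₂ τ σ ε → D₂ (τ + p) (σ + p) ε)
    (symm₂ : ∀ τ σ ε, D₂ τ σ ε → D₂ σ τ ε)
    (dense₂ : ∀ ε : ℝ, 0 < ε → RelDenseZ {τ | D₂ τ 0 ε}) :
    ∀ ε : ℝ, 0 < ε → RelDenseZ {τ | D₁ τ 0 ε ∧ D₂ τ 0 ε} := by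
  classical
  intro ε hε
  have hε2 : 0 < ε / 2 := by linarith
  obtain ⟨l₁, hl₁, hd₁⟩ := dense₁ (ε / 2) hε2
  obtain ⟨l₂, hl₂, hd₂⟩ := dense₂ (ε / 2) hε2
  choose s₁ hs₁0 hs₁l hD₁ using approx_aux D₁ shift₁ (ε / 2) l₁ hd₁
  choose s₂ hs₂0 hs₂l hD₂ using approx_aux D₂ shift₂ (ε / 2) l₂ hd₂
  set P : Finset (ℤ × ℤ) := Finset.Icc 0 l₁ ×ˢ Finset.Icc 0 l₂ with hP
  set rep : ℤ × ℤ → ℤ :=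
    fun pr => if h : ∃ τ, (s₁ τ, s₂ τ) = pr then h.choose else 0 with hrep
  set B : ℤ := ((P.sup fun pr => (rep pr).natAbs : ℕ) : ℤ) with hB
  have hB0 : 0 ≤ B := by positivity
  refine ⟨2 * B + 1, by omega, fun m => ?_⟩
  set τ : ℤ := m + B with hτdef
  have hmem : (s₁ τ, s₂ τ) ∈ P := by
    simp only [hP, Finset.mem_product, Finset.mem_Icc]
    exact ⟨⟨hs₁0 τ, hs₁l τ⟩, ⟨hs₂0 τ, hs₂l τ⟩⟩
  have hex : ∃ τ', (s₁ τ', s₂ τ') = (s₁ τ, s₂ τ) := ⟨τ, rfl⟩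
  set τ₀ : ℤ := rep (s₁ τ, s₂ τ) with hτ₀def
  have hτ₀ : (s₁ τ₀, s₂ τ₀) = (s₁ τ, s₂ τ) := by
    have : rep (s₁ τ, s₂ τ) = hex.choose := dif_pos hex
    rw [hτ₀def, this]
    exact hex.choose_spec
  have hs₁eq : s₁ τ₀ = s₁ τ := (Prod.mk.injEq _ _ _ _).mp hτ₀ |>.1
  have hs₂eq : s₂ τ₀ = s₂ τ := (Prod.mk.injEq _ _ _ _).mp hτ₀ |>.2
  have h1 : (rep (s₁ τ, s₂ τ)).natAbs ≤ P.sup fun pr => (rep pr).natAbs :=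
    Finset.le_sup (f := fun pr => (rep pr).natAbs) hmem
  have h2 : ((τ₀.natAbs : ℕ) : ℤ) ≤ B := by rw [hB]; exact_mod_cast h1
  have hτ₀lo : -B ≤ τ₀ := by omega
  have hτ₀hi : τ₀ ≤ B := by omega
  have hhalf : ε / 2 + ε / 2 = ε := by ring
  have mk₁ : D₁ (τ - τ₀) 0 ε := by
    have h1 : D₁ τ (s₁ τ) (ε / 2) := hD₁ τ
    have h2 : D₁ (s₁ τ) τ₀ (ε / 2) := symm₁ _ _ _ (hs₁eq ▸ hD₁ τ₀)
    have h3 : D₁ τ τ₀ ε := hhalf ▸ tri₁ τ (s₁ τ) τ₀ (ε / 2) (ε / 2) h1 h2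
    have h4 := shift₁ τ τ₀ (-τ₀) ε h3
    have e1 : τ + -τ₀ = τ - τ₀ := by ring
    have e2 : τ₀ + -τ₀ = 0 := by ring
    rwa [e1, e2] at h4
  have mk₂ : D₂ (τ - τ₀) 0 ε := by
    have h1 : D₂ τ (s₂ τ) (ε / 2) := hD₂ τ
    have h2 : D₂ (s₂ τ) τ₀ (ε / 2) := symm₂ _ _ _ (hs₂eq ▸ hD₂ τ₀)
    have h3 : D₂ τ τ₀ ε := hhalf ▸ tri₂ τ (s₂ τ) τ₀ (ε / 2) (ε / 2) h1 h2
    have h4 := shift₂ τ τ₀ (-τ₀) ε h3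
    have e1 : τ + -τ₀ = τ - τ₀ := by ring
    have e2 : τ₀ + -τ₀ = 0 := by ring
    rwa [e1, e2] at h4
  exact ⟨τ - τ₀, ⟨mk₁, mk₂⟩, by omega, by omega⟩

/-- Discrepancy relation associated to a sequence. -/
def Dseq {E : Type*} [NormedAddCommGroup E] (g : ℤ → E) : ℤ → ℤ → ℝ → Prop :=
  fun τ σ ε => ∀ n : ℤ, ‖g (n + τ) - g (n + σ)‖ ≤ ε

lemma Dseq_tri {E : Type*} [NormedAddCommGroup E] (g : ℤ → E) :
    ∀ τ a σ ε δ, Dseq g τ a ε → Dseq g a σ δ → Dseq g τ σ (ε + δ) := by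
  intro τ a σ ε δ h1 h2 n
  calc ‖g (n + τ) - g (n + σ)‖
      ≤ ‖g (n + τ) - g (n + a)‖ + ‖g (n + a) - g (n + σ)‖ :=
        norm_sub_le_norm_sub_add_norm_sub _ _ _
    _ ≤ ε + δ := add_le_add (h1 n) (h2 n)

lemma Dseq_shift {E : Type*} [NormedAddCommGroup E] (g : ℤ → E) :
    ∀ τ σ p ε, Dseq g τ σ ε → Dseq g (τ + p) (σ + p) ε := by
  intro τ σ p ε h n
  have e1 : n + (τ + p) = (n + p) + τ := by ring
  have e2 : n + (σ + p) = (n + p) + σ := by ring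
  rw [e1, e2]
  exact h (n + p)

lemma Dseq_symm {E : Type*} [NormedAddCommGroup E] (g : ℤ → E) :
    ∀ τ σ ε, Dseq g τ σ ε → Dseq g σ τ ε := by
  intro τ σ ε h n
  rw [norm_sub_rev]
  exact h n

lemma Dseq_dense {E : Type*} [NormedAddCommGroup E] (g : ℤ → E) (hg : APZ g) :
    ∀ ε : ℝ, 0 < ε → RelDenseZ {τ | Dseq g τ 0 ε} := by
  intro ε hε
  refine relDenseZ_mono ?_ (hg ε hε)
  intro τ hτ n
  simpa using hτ n

/-- Discrepancy relation for the family `t_n^{(k)}`. -/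
def Dts (ts : ℤ → ℝ) : ℤ → ℤ → ℝ → Prop :=
  fun τ σ ε => ∀ k n : ℤ,
    |(ts (τ + n + k) - ts (τ + n)) - (ts (σ + n + k) - ts (σ + n))| ≤ ε

lemma Dts_tri (ts : ℤ → ℝ) :
    ∀ τ a σ ε δ, Dts ts τ a ε → Dts ts a σ δ → Dts ts τ σ (ε + δ) := by
  intro τ a σ ε δ h1 h2 k n
  calc |(ts (τ + n + k) - ts (τ + n)) - (ts (σ + n + k) - ts (σ + n))|
      ≤ |(ts (τ + n + k) - ts (τ + n)) - (ts (a + n + k) - ts (a + n))| +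
        |(ts (a + n + k) - ts (a + n)) - (ts (σ + n + k) - ts (σ + n))| := by
          have h := abs_add_le ((ts (τ + n + k) - ts (τ + n)) - (ts (a + n + k) - ts (a + n)))
            ((ts (a + n + k) - ts (a + n)) - (ts (σ + n + k) - ts (σ + n)))
          have e : (ts (τ + n + k) - ts (τ + n)) - (ts (a + n + k) - ts (a + n)) +
              ((ts (a + n + k) - ts (a + n)) - (ts (σ + n + k) - ts (σ + n))) =
              (ts (τ + n + k) - ts (τ + n)) - (ts (σ + n + k) - ts (σ + n)) := by ring
          rw [e] at h
          exact h
    _ ≤ ε + δ := add_le_add (h1 k n) (h2 k n)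

lemma Dts_shift (ts : ℤ → ℝ) :
    ∀ τ σ p ε, Dts ts τ σ ε → Dts ts (τ + p) (σ + p) ε := by
  intro τ σ p ε h k n
  have e1 : τ + p + n = τ + (p + n) := by ring
  have e2 : σ + p + n = σ + (p + n) := by ring
  rw [e1, e2]
  exact h k (p + n)

lemma Dts_symm (ts : ℤ → ℝ) :
    ∀ τ σ ε, Dts ts τ σ ε → Dts ts σ τ ε := by
  intro τ σ ε h k n
  rw [abs_sub_comm]
  exact h k n

lemma Dts_dense (ts : ℤ → ℝ) (hEqui : EquiAP ts) :
    ∀ ε : ℝ, 0 < ε → RelDenseZ {τ | Dts ts τ 0 ε} := by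
  intro ε hε
  refine relDenseZ_mono ?_ (hEqui ε hε)
  intro τ hτ k n
  simpa using hτ k n

/-- if `(t_n^{(k)})` is equipotentially almost periodic and `g₁, g₂` are
almost periodic sequences, then `P_ε ∩ T(g₁, ε) ∩ T(g₂, ε)` is relatively dense in `ℤ`. -/
theorem pe_inter_two_translation_sets_relatively_dense {q : ℕ} (hq : 1 ≤ q)
    (ts : ℤ → ℝ) (hts : StrictMono ts)
    (htop : Tendsto ts atTop atTop) (hbot : Tendsto ts atBot atBot)
    (hEqui : EquiAP ts)
    (g₁ g₂ : ℤ → Vec q) (hg₁ : APZ g₁) (hg₂ : APZ g₂) :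
    ∀ ε : ℝ, 0 < ε →
      RelDenseZ (PESet ts ε ∩ {τ : ℤ | ∀ n : ℤ, ‖g₁ (n + τ) - g₁ n‖ ≤ ε} ∩
        {τ : ℤ | ∀ n : ℤ, ‖g₂ (n + τ) - g₂ n‖ ≤ ε}) := by
  intro ε hε
  -- common almost periods of g₁ and g₂
  have hpair : ∀ δ : ℝ, 0 < δ →
      RelDenseZ {τ | (Dseq g₁ τ 0 δ ∧ Dseq g₂ τ 0 δ)} :=
    key_lemma (Dseq g₁) (Dseq g₂) (Dseq_tri g₁) (Dseq_shift g₁) (Dseq_symm g₁)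
      (Dseq_dense g₁ hg₁) (Dseq_tri g₂) (Dseq_shift g₂) (Dseq_symm g₂)
      (Dseq_dense g₂ hg₂)
  -- the pair relation
  set Dp : ℤ → ℤ → ℝ → Prop := fun τ σ δ => Dseq g₁ τ σ δ ∧ Dseq g₂ τ σ δ with hDp
  have hdense : RelDenseZ {τ | Dts ts τ 0 ε ∧ Dp τ 0 ε} := by
    refine key_lemma (Dts ts) Dp (Dts_tri ts) (Dts_shift ts) (Dts_symm ts)
      (Dts_dense ts hEqui) ?_ ?_ ?_ ?_ ε hε
    · intro τ a σ e d h1 h2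
      exact ⟨Dseq_tri g₁ τ a σ e d h1.1 h2.1, Dseq_tri g₂ τ a σ e d h1.2 h2.2⟩
    · intro τ σ p e h
      exact ⟨Dseq_shift g₁ τ σ p e h.1, Dseq_shift g₂ τ σ p e h.2⟩
    · intro τ σ e h
      exact ⟨Dseq_symm g₁ τ σ e h.1, Dseq_symm g₂ τ σ e h.2⟩
    · exact hpair
  refine relDenseZ_mono ?_ hdense
  rintro τ ⟨hu, h1, h2⟩
  refine ⟨⟨?_, ?_⟩, ?_⟩
  · -- τ ∈ PESet ts ε
    have key : ∀ n : ℤ, |ts (n + τ) - ts n - (ts τ - ts 0)| ≤ ε := by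
      intro n
      have h := hu n 0
      have e1 : τ + 0 + n = n + τ := by ring
      have e2 : τ + 0 = τ := by ring
      have e3 : (0 : ℤ) + 0 + n = n := by ring
      have e4 : (0 : ℤ) + 0 = 0 := by ring
      rw [e1, e2, e3, e4] at h
      calc |ts (n + τ) - ts n - (ts τ - ts 0)|
          = |(ts (n + τ) - ts τ) - (ts n - ts 0)| := by ring_nf
        _ ≤ ε := h
    exact Set.mem_biUnion (⟨τ, key⟩ : (ts τ - ts 0) ∈ GammaSet ts ε) key
  · intro n
    simpa using h1 n
  · intro n
    simpa using h2 n
end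
end

section
/- Assume the family (t_n^{(k)}) is equipotentially almost periodic. Let ε > 0, let Γ be a nonempty subset of Γ_ε, and let P ⊆ ⋃_{r∈Γ} P_r(ε) be such that P ∩ P_r(ε) ≠ ∅ for every r ∈ Γ. Then Γ is relatively dense in ℝ if and only if P is relatively dense in ℤ. -/
open Filter

noncomputable section

/-!
Equipotential almost periodicity (with tolerance `1`) moves every index `n` to some `j ∈ [0, l₀]`
without changing any difference `t_{n+k} - t_n` by more than `1`. Hence the steps `t_{n+1} - t_n` are
uniformly bounded and the differences `t_{n+l} - t_n` grow uniformly in `n`, so `k ↦ t_k - t_0`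
is a coarse equivalence between `ℤ` and `ℝ`. For `k ∈ P_r(ε)` we have `|t_k - t_0 - r| ≤ ε`, so this
map carries `P` to within `ε` of `Γ` and conversely, and relative density transfers both ways.
-/

section

variable {ts : ℤ → ℝ}

theorem EquiAP.exists_near_translate (hEqui : EquiAP ts) {δ : ℝ} (hδ : 0 < δ) :
    ∃ l₀ : ℤ, 0 < l₀ ∧ ∀ n : ℤ, ∃ j ∈ Set.Icc 0 l₀,
      ∀ k : ℤ, |(ts (j + k) - ts j) - (ts (n + k) - ts n)| ≤ δ := by
  obtain ⟨l₀, hl₀, hT⟩ := hEqui δ hδ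
  refine ⟨l₀, hl₀, fun n => ?_⟩
  obtain ⟨T, hT, hT₀, hTl⟩ := hT (-n)
  exact ⟨T + n, ⟨by omega, by omega⟩, fun k => hT k n⟩

theorem EquiAP.exists_forall_add_one_sub_le (hEqui : EquiAP ts) (hts : Monotone ts) :
    ∃ M : ℝ, ∀ n : ℤ, ts (n + 1) - ts n ≤ M := by
  obtain ⟨l₀, -, htrans⟩ := hEqui.exists_near_translate one_pos
  refine ⟨ts (l₀ + 1) - ts 0 + 1, fun n => ?_⟩
  obtain ⟨j, ⟨hj₀, hjl⟩, hnear⟩ := htrans n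
  have h₁ : ts (j + 1) ≤ ts (l₀ + 1) := hts (by omega)
  have h₂ : ts 0 ≤ ts j := hts hj₀
  linarith [(abs_le.1 (hnear 1)).1]

theorem EquiAP.exists_pos_forall_lt_add_sub (hEqui : EquiAP ts) (hts : Monotone ts)
    (htop : Tendsto ts atTop atTop) (D : ℝ) :
    ∃ l : ℤ, 0 < l ∧ ∀ n : ℤ, D < ts (n + l) - ts n := by
  obtain ⟨l₀, -, htrans⟩ := hEqui.exists_near_translate one_pos
  obtain ⟨l, hlD, hl⟩ :=
    ((htop.eventually (eventually_gt_atTop (ts l₀ + 1 + D))).and (eventually_gt_atTop 0)).exists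
  refine ⟨l, hl, fun n => ?_⟩
  obtain ⟨j, ⟨hj₀, hjl⟩, hnear⟩ := htrans n
  have h₁ : ts l ≤ ts (j + l) := hts (by omega)
  have h₂ : ts j ≤ ts l₀ := hts hjl
  linarith [(abs_le.1 (hnear l)).2]

variable {M : ℝ}

theorem add_sub_le_mul_of_forall_add_one_sub_le (hstep : ∀ n, ts (n + 1) - ts n ≤ M)
    (n : ℤ) {j : ℤ} (hj : 0 ≤ j) : ts (n + j) - ts n ≤ j * M := by
  induction j, hj using Int.leInduction with
  | base => simp
  | succ j _ ih =>
    have := hstep (n + j)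
    rw [← add_assoc]
    push_cast
    linarith

theorem exists_mem_Icc_of_forall_add_one_sub_le (hstep : ∀ n, ts (n + 1) - ts n ≤ M)
    (htop : Tendsto ts atTop atTop) (hbot : Tendsto ts atBot atBot) (x : ℝ) :
    ∃ n : ℤ, ts n ∈ Set.Icc x (x + M) := by
  have hne : ∃ n, x ≤ ts n := (htop.eventually (eventually_ge_atTop x)).exists
  have hbdd : ∃ b : ℤ, ∀ z : ℤ, x ≤ ts z → b ≤ z := by
    obtain ⟨b, hb⟩ := eventually_atBot.1 (hbot.eventually (eventually_lt_atBot x))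
    exact ⟨b + 1, fun z hz => by_contra fun h => (hb z (by omega)).not_ge hz⟩
  -- the first index with `x ≤ t_n` overshoots `x` by at most one step
  obtain ⟨n, hn, hmin⟩ := Int.exists_least_of_bdd hbdd hne
  have hprev : ts (n - 1) < x := lt_of_not_ge fun h => by have := hmin _ h; omega
  have := hstep (n - 1)
  rw [sub_add_cancel] at this
  exact ⟨n, hn, by linarith⟩

end

theorem RelDenseR.relDenseZ_of_forall_exists_abs_sub_le {ts : ℤ → ℝ} (hts : StrictMono ts)
    (hgrow : ∀ D : ℝ, ∃ l : ℤ, 0 < l ∧ ∀ n, D < ts (n + l) - ts n)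
    {Γ : Set ℝ} (hΓ : RelDenseR Γ) {P : Set ℤ} {c ε : ℝ}
    (hnear : ∀ r ∈ Γ, ∃ k ∈ P, |ts k - c - r| ≤ ε) : RelDenseZ P := by
  obtain ⟨L, -, hL⟩ := hΓ
  obtain ⟨l, hl, hlgrow⟩ := hgrow (L + 2 * ε)
  refine ⟨l, hl, fun m => ?_⟩
  obtain ⟨r, hrΓ, hr₁, hr₂⟩ := hL (ts m - c + ε)
  obtain ⟨k, hkP, hk⟩ := hnear r hrΓ
  have hk' := abs_le.1 hk
  have h₁ : ts m ≤ ts k := by linarith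
  have h₂ : ts k < ts (m + l) := by linarith [hlgrow m]
  exact ⟨k, hkP, hts.le_iff_le.1 h₁, (hts.lt_iff_lt.1 h₂).le⟩

theorem RelDenseZ.relDenseR_of_forall_exists_abs_sub_le {ts : ℤ → ℝ} (hts : StrictMono ts)
    {M : ℝ} (hstep : ∀ n, ts (n + 1) - ts n ≤ M) (hhit : ∀ x, ∃ n, ts n ∈ Set.Icc x (x + M))
    {P : Set ℤ} (hP : RelDenseZ P) {Γ : Set ℝ} {c ε : ℝ} (hε : 0 ≤ ε)
    (hnear : ∀ k ∈ P, ∃ r ∈ Γ, |ts k - c - r| ≤ ε) : RelDenseR Γ := by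
  obtain ⟨l, hl, hlP⟩ := hP
  have hM : 0 < M := by linarith [hstep 0, hts (lt_add_one (0 : ℤ))]
  refine ⟨2 * ε + (l + 1) * M, by positivity, fun x => ?_⟩
  obtain ⟨n, hn₁, hn₂⟩ := hhit (c + x + ε)
  obtain ⟨k, hkP, hk₁, hk₂⟩ := hlP n
  obtain ⟨r, hrΓ, hr⟩ := hnear k hkP
  have hr' := abs_le.1 hr
  have h₁ : ts n ≤ ts k := hts.monotone hk₁
  have h₂ : ts k ≤ ts (n + l) := hts.monotone hk₂
  have h₃ := add_sub_le_mul_of_forall_add_one_sub_le hstep n hl.le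
  exact ⟨r, hrΓ, by linarith, by linarith⟩

theorem gamma_relatively_dense_iff_p_relatively_dense_general
    (ts : ℤ → ℝ) (hts : StrictMono ts)
    (htop : Tendsto ts atTop atTop) (hbot : Tendsto ts atBot atBot)
    (hEqui : EquiAP ts)
    (ε : ℝ) (hε : 0 < ε)
    (Γ : Set ℝ)
    (P : Set ℤ) (hPsub : P ⊆ ⋃ r ∈ Γ, PkSet ts ε r)
    (hPmeet : ∀ r ∈ Γ, (P ∩ PkSet ts ε r).Nonempty) :
    RelDenseR Γ ↔ RelDenseZ P := by
  obtain ⟨M, hstep⟩ := hEqui.exists_forall_add_one_sub_le hts.monotone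
  constructor
  · refine fun hΓ => hΓ.relDenseZ_of_forall_exists_abs_sub_le hts
      (hEqui.exists_pos_forall_lt_add_sub hts.monotone htop) (c := ts 0) (ε := ε) fun r hr => ?_
    obtain ⟨k, hkP, hk⟩ := hPmeet r hr
    exact ⟨k, hkP, by simpa using hk 0⟩
  · refine fun hP => hP.relDenseR_of_forall_exists_abs_sub_le hts hstep
      (exists_mem_Icc_of_forall_add_one_sub_le hstep htop hbot) (c := ts 0) hε.le fun k hk => ?_
    obtain ⟨r, hr, hkr⟩ := Set.mem_iUnion₂.1 (hPsub hk)
    exact ⟨r, hr, by simpa using hkr 0⟩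

/-- for `Γ ⊆ Γ_ε` nonempty and `P ⊆ ⋃_{r∈Γ} P_r(ε)` meeting every `P_r(ε)`
with `r ∈ Γ`, the set `Γ` is relatively dense in `ℝ` iff `P` is relatively dense in `ℤ`. -/
theorem gamma_relatively_dense_iff_p_relatively_dense
    (ts : ℤ → ℝ) (hts : StrictMono ts)
    (htop : Tendsto ts atTop atTop) (hbot : Tendsto ts atBot atBot)
    (hEqui : EquiAP ts)
    (ε : ℝ) (hε : 0 < ε)
    (Γ : Set ℝ) (hΓsub : Γ ⊆ GammaSet ts ε) (hΓne : Γ.Nonempty)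
    (P : Set ℤ) (hPsub : P ⊆ ⋃ r ∈ Γ, PkSet ts ε r)
    (hPmeet : ∀ r ∈ Γ, (P ∩ PkSet ts ε r).Nonempty) :
    RelDenseR Γ ↔ RelDenseZ P :=
  gamma_relatively_dense_iff_p_relatively_dense_general ts hts htop hbot hEqui ε hε Γ P hPsub hPmeet
end
end

section
/- The following statements are equivalent: (a) the family (t_n^{(k)}) is equipotentially almost periodic; (b) for every ε > 0 the set P_ε is relatively dense in ℤ; (c) for every ε > 0 the set Γ_ε is relatively dense in ℝ. -/
open Filter

noncomputable section

lemma mem_PESet_of {ts : ℤ → ℝ} {ε r : ℝ} {k : ℤ} (h : k ∈ PkSet ts ε r) :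
    k ∈ PESet ts ε :=
  Set.mem_iUnion₂.2 ⟨r, ⟨k, h⟩, h⟩

lemma exists_of_mem_PESet {ts : ℤ → ℝ} {ε : ℝ} {k : ℤ} (h : k ∈ PESet ts ε) :
    ∃ r : ℝ, ∀ n : ℤ, |ts (n + k) - ts n - r| ≤ ε := by
  obtain ⟨r, -, hr⟩ := Set.mem_iUnion₂.1 h
  exact ⟨r, hr⟩

lemma sum_gap_le {ts : ℤ → ℝ} {C : ℝ} (hC : ∀ n : ℤ, ts (n + 1) - ts n ≤ C)
    (a : ℤ) : ∀ j : ℕ, ts (a + j) - ts a ≤ j * C := by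
  intro j
  induction j with
  | zero => simp
  | succ j ih =>
    have e : a + ((j : ℤ) + 1) = (a + j) + 1 := by ring
    have h1 := hC (a + j)
    push_cast
    rw [e]
    push_cast at ih
    linarith

lemma sum_gap_ge {ts : ℤ → ℝ} {k₀ : ℤ} (h : ∀ n : ℤ, 1 ≤ ts (n + k₀) - ts n)
    (a : ℤ) : ∀ j : ℕ, (j : ℝ) ≤ ts (a + k₀ * j) - ts a := by
  intro j
  induction j with
  | zero => simp
  | succ j ih =>
    have e : a + k₀ * ((j : ℤ) + 1) = (a + k₀ * j) + k₀ := by ring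
    have h1 := h (a + k₀ * j)
    push_cast
    rw [e]
    push_cast at ih
    linarith

lemma exists_ts_near {ts : ℤ → ℝ} (htop : Tendsto ts atTop atTop)
    (hbot : Tendsto ts atBot atBot) {C : ℝ}
    (hC : ∀ n : ℤ, ts (n + 1) - ts n ≤ C) (X : ℝ) :
    ∃ n : ℤ, X ≤ ts n ∧ ts n ≤ X + C := by
  classical
  obtain ⟨N, hN⟩ := eventually_atBot.1 (hbot.eventually (eventually_le_atBot (X - 1)))
  obtain ⟨M, hM⟩ := (htop.eventually (eventually_ge_atTop X)).exists
  have hbdd : ∃ b : ℤ, ∀ z : ℤ, X ≤ ts z → b ≤ z := by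
    refine ⟨N + 1, fun z hz => ?_⟩
    by_contra hc
    push_neg at hc
    have := hN z (by omega)
    linarith
  obtain ⟨lb, hlb, hmin⟩ := Int.exists_least_of_bdd hbdd ⟨M, hM⟩
  refine ⟨lb, hlb, ?_⟩
  have h1 : ¬ X ≤ ts (lb - 1) := by
    intro h
    have := hmin _ h
    omega
  push_neg at h1
  have h2 := hC (lb - 1)
  have e : lb - 1 + 1 = lb := by ring
  rw [e] at h2
  linarith

/-- equivalence of (a) equipotential almost periodicity of `(t_n^{(k)})`,
(b) relative density of `P_ε` in `ℤ` for all `ε > 0`, and (c) relative density of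
`Γ_ε` in `ℝ` for all `ε > 0`. -/
theorem equi_ap_iff_pe_dense_iff_gamma_dense
    (ts : ℤ → ℝ) (hts : StrictMono ts)
    (htop : Tendsto ts atTop atTop) (hbot : Tendsto ts atBot atBot) :
    (EquiAP ts ↔ ∀ ε : ℝ, 0 < ε → RelDenseZ (PESet ts ε)) ∧
    (EquiAP ts ↔ ∀ ε : ℝ, 0 < ε → RelDenseR (GammaSet ts ε)) := by
  have hab : EquiAP ts ↔ ∀ ε : ℝ, 0 < ε → RelDenseZ (PESet ts ε) := by
    constructor
    · intro h ε hε
      obtain ⟨l, hl, hm⟩ := h ε hε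
      refine ⟨l, hl, fun m => ?_⟩
      obtain ⟨T, hT, hTm⟩ := hm m
      refine ⟨T, mem_PESet_of (r := ts T - ts 0) (fun n => ?_), hTm⟩
      have e : ts (n + T) - ts n - (ts T - ts 0)
          = ts (T + 0 + n) - ts (T + 0) - (ts (0 + n) - ts 0) := by
        rw [show T + 0 + n = n + T by ring, show T + 0 = T by ring,
          show (0 : ℤ) + n = n by ring]
        ring
      rw [e]
      exact hT n 0
    · intro h ε hε
      obtain ⟨l, hl, hm⟩ := h (ε / 2) (by linarith)
      refine ⟨l, hl, fun m => ?_⟩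
      obtain ⟨k, hk, hkm⟩ := hm m
      obtain ⟨r, hr⟩ := exists_of_mem_PESet hk
      refine ⟨k, fun k' n => ?_, hkm⟩
      have A := hr (n + k')
      have B := hr n
      rw [show k + n + k' = n + k' + k by ring, show k + n = n + k by ring]
      rw [abs_le] at A B ⊢
      constructor <;> linarith [A.1, A.2, B.1, B.2]
  have hbc : (∀ ε : ℝ, 0 < ε → RelDenseZ (PESet ts ε)) ↔
      (∀ ε : ℝ, 0 < ε → RelDenseR (GammaSet ts ε)) := by
    constructor
    · intro hP ε hε
      obtain ⟨l, hl, hPl⟩ := hP ε hε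
      obtain ⟨k₁, hk₁P, hk₁I⟩ := hPl 1
      obtain ⟨r₁, hr₁⟩ := exists_of_mem_PESet hk₁P
      have hk₁1 : 1 ≤ k₁ := hk₁I.1
      set C : ℝ := r₁ + ε with hCdef
      have hgap : ∀ n : ℤ, ts (n + 1) - ts n ≤ C := by
        intro n
        have h1 := hr₁ n
        rw [abs_le] at h1
        have h2 : ts (n + 1) ≤ ts (n + k₁) := hts.monotone (by omega)
        linarith [h1.2]
      have hCpos : 0 < C := by
        have h1 := hr₁ 0
        rw [abs_le] at h1
        have h2 : ts 0 < ts (0 + k₁) := hts (by omega)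
        linarith [h1.1]
      have hl1 : (0 : ℝ) < (l : ℝ) := by exact_mod_cast hl
      refine ⟨((l : ℝ) + 1) * C + 2 * ε, by nlinarith, fun m => ?_⟩
      obtain ⟨n, hn1, hn2⟩ := exists_ts_near htop hbot hgap (ts 0 + m + ε)
      obtain ⟨k, hkP, hkI⟩ := hPl n
      obtain ⟨r, hrΓ, hr⟩ := Set.mem_iUnion₂.1 hkP
      have h0 := hr 0
      rw [zero_add, abs_le] at h0
      have hkn : ts n ≤ ts k := hts.monotone hkI.1
      have hknl : ts k ≤ ts (n + l) := hts.monotone hkI.2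
      have hsum := sum_gap_le hgap n l.toNat
      rw [show ((l.toNat : ℤ) : ℤ) = l from Int.toNat_of_nonneg hl.le] at hsum
      have hcast : ((l.toNat : ℕ) : ℝ) = (l : ℝ) := by
        rw [← Int.cast_natCast, Int.toNat_of_nonneg hl.le]
      rw [hcast] at hsum
      refine ⟨r, hrΓ, ?_, ?_⟩ <;> [skip; skip]
      · linarith [h0.1]
      · linarith [h0.2]
    · intro hΓ ε hε
      obtain ⟨L, hL, hΓL⟩ := hΓ ε hε
      obtain ⟨r₀, hr₀Γ, hr₀I⟩ := hΓL (ε + 1)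
      obtain ⟨k₀, hk₀⟩ := hr₀Γ
      have h1 : ∀ n : ℤ, 1 ≤ ts (n + k₀) - ts n := by
        intro n
        have h := hk₀ n
        rw [abs_le] at h
        have := hr₀I.1
        linarith [h.2]
      have hk₀1 : 1 ≤ k₀ := by
        by_contra hc
        push_neg at hc
        have h2 : ts (0 + k₀) ≤ ts 0 := hts.monotone (by omega)
        have := h1 0
        linarith
      set j : ℕ := ⌈L + 2 * ε⌉₊ with hjdef
      have hjge : L + 2 * ε ≤ (j : ℝ) := Nat.le_ceil _
      have hjpos : 0 < j := Nat.ceil_pos.2 (by linarith)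
      refine ⟨k₀ * j, by positivity, fun m => ?_⟩
      obtain ⟨r, hrΓ, hrI⟩ := hΓL (ts m - ts 0 + ε)
      obtain ⟨k, hk⟩ := hrΓ
      have h0 := hk 0
      rw [zero_add, abs_le] at h0
      have hmk : m ≤ k := by
        rw [← hts.le_iff_le]
        have := hrI.1
        linarith [h0.1]
      have hkml : k ≤ m + k₀ * j := by
        rw [← hts.le_iff_le]
        have hsum := sum_gap_ge h1 m j
        have := hrI.2
        linarith [h0.2]
      exact ⟨k, mem_PESet_of hk, hmk, hkml⟩
  exact ⟨hab, hab.trans hbc⟩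
end
end

section
/- Assume the family (t_n^{(k)}) is equipotentially almost periodic and f : ℝ → ℂ^q satisfies (H3). Then for every ε > 0 the set Γ_ε ∩ T(f, ε) is relatively dense in ℝ. -/
open Filter

noncomputable section

/-! `(H3)` makes `f` continuous across the points `ts n`, and since `ts` is uniformly separated
(`1 ≤ ts (n + K) - ts n`) a short interval meets boundedly many cells, so `f` is uniformly
continuous. Every point is then close to one at a fixed distance from all `ts n`, so the `(H3)`
translation numbers are genuine almost periods of `f`. For each `s` choose an equi-almost period
`T s` of `ts` moving the cell index `m s` of `s` into a fixed window, and an almost period `τ s` of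
`f` moving `s` into a fixed window. The colour of `s` (namely `m s + T s` and the positions of `s`
in its cell and of `s + τ s`, read off on a fine grid) takes finitely many values, and two points
of the same colour differ by a common almost period; representatives of the colours then witness
relative density. -/

open Set Topology

section AlmostPeriods

variable {G E : Type*} [AddCommGroup G] [SeminormedAddCommGroup E]

def almostPeriods (g : G → E) (ε : ℝ) : Set G :=
  {τ | ∀ t, ‖g (t + τ) - g t‖ ≤ ε}

variable {g : G → E} {ε ε' : ℝ} {τ σ : G}

lemma neg_mem_almostPeriods (hτ : τ ∈ almostPeriods g ε) : -τ ∈ almostPeriods g ε := by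
  intro t
  simpa [norm_sub_rev] using hτ (t + -τ)

lemma add_mem_almostPeriods (hτ : τ ∈ almostPeriods g ε) (hσ : σ ∈ almostPeriods g ε') :
    τ + σ ∈ almostPeriods g (ε + ε') := by
  intro t
  rw [← add_assoc]
  exact (norm_sub_le_norm_sub_add_norm_sub _ (g (t + τ)) _).trans (by linarith [hτ t, hσ (t + τ)])

lemma sub_mem_almostPeriods (hτ : τ ∈ almostPeriods g ε) (hσ : σ ∈ almostPeriods g ε') :
    τ - σ ∈ almostPeriods g (ε + ε') := by
  simpa [sub_eq_add_neg] using add_mem_almostPeriods hτ (neg_mem_almostPeriods hσ)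

lemma sub_mem_almostPeriods_of_add_sub_mem {s₁ s₂ τ₁ τ₂ : G}
    (h₁ : τ₁ ∈ almostPeriods g ε) (h₂ : τ₂ ∈ almostPeriods g ε)
    (h : s₁ + τ₁ - (s₂ + τ₂) ∈ almostPeriods g ε') :
    s₁ - s₂ ∈ almostPeriods g (ε' + ε + ε) := by
  have h' := sub_mem_almostPeriods (add_mem_almostPeriods h h₂) h₁
  rwa [show s₁ + τ₁ - (s₂ + τ₂) + τ₂ - τ₁ = s₁ - s₂ by abel] at h'

end AlmostPeriods

lemma UniformContinuous.almostPeriods_mem_nhds {G E : Type*} [SeminormedAddCommGroup G]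
    [SeminormedAddCommGroup E] {g : G → E} (hg : UniformContinuous g) {ε : ℝ} (hε : 0 < ε) :
    almostPeriods g ε ∈ 𝓝 (0 : G) := by
  obtain ⟨δ, hδ, h⟩ := Metric.uniformContinuous_iff.1 hg ε hε
  refine Metric.mem_nhds_iff.2 ⟨δ, hδ, fun τ hτ t => ?_⟩
  rw [← dist_eq_norm]
  exact (h (by simpa [dist_eq_norm] using hτ)).le

lemma abs_sub_lt_of_floor_div_eq {a b c : ℝ} (hc : 0 < c) (h : ⌊a / c⌋ = ⌊b / c⌋) :
    |a - b| < c := by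
  have h' := Int.abs_sub_lt_one_of_floor_eq_floor h
  rwa [← sub_div, abs_div, abs_of_pos hc, div_lt_one hc] at h'

lemma Set.Finite.range_pair {α β γ : Type*} {f : α → β} {g : α → γ} (hf : (range f).Finite)
    (hg : (range g).Finite) : (range fun x => (f x, g x)).Finite :=
  (hf.prod hg).subset (range_pair_subset f g)

lemma finite_range_floor_div {α : Type*} {u : α → ℝ} {a b : ℝ} (hu : ∀ x, u x ∈ Icc a b)
    {η : ℝ} (hη : 0 < η) : (range fun x => ⌊u x / η⌋).Finite :=
  (finite_Icc ⌊a / η⌋ ⌊b / η⌋).subset <| range_subset_iff.2 fun x =>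
    ⟨Int.floor_le_floor (by gcongr; exact (hu x).1), Int.floor_le_floor (by gcongr; exact (hu x).2)⟩

lemma RelDenseR.mono {D D' : Set ℝ} (h : RelDenseR D) (hD : D ⊆ D') : RelDenseR D' :=
  let ⟨l, hl, hD'⟩ := h
  ⟨l, hl, fun m => (hD' m).mono (inter_subset_inter_left _ hD)⟩

lemma relDenseR_of_finite_range {D : Set ℝ} {ι : Type*} (c : ℝ → ι) (hc : (range c).Finite)
    (hD : ∀ x y, c x = c y → x - y ∈ D) : RelDenseR D := by
  have : Finite (range c) := hc.to_subtype
  choose r hr using fun i : range c => i.2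
  obtain ⟨M, hM, hrM⟩ := (finite_range r).isBounded.exists_pos_norm_le
  refine ⟨2 * M, by positivity, fun m => ?_⟩
  have hx := hr ⟨c (m + M), m + M, rfl⟩
  have hrx := abs_le.1 (hrM _ ⟨⟨c (m + M), m + M, rfl⟩, rfl⟩)
  exact ⟨_, hD _ _ hx.symm, by linarith [hrx.2], by linarith [hrx.1]⟩

section Sequence

variable {ts : ℤ → ℝ}

def equiAlmostPeriods (ts : ℤ → ℝ) (ε : ℝ) : Set ℤ :=
  ⋂ k, almostPeriods (fun n => ts (n + k) - ts n) ε

lemma EquiAP.relDenseZ (h : EquiAP ts) {ε : ℝ} (hε : 0 < ε) :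
    RelDenseZ (equiAlmostPeriods ts ε) := by
  convert h ε hε using 2
  ext T
  simp only [equiAlmostPeriods, almostPeriods, mem_iInter, mem_ofPred_eq, Real.norm_eq_abs]
  exact forall_congr' fun k => forall_congr' fun n => by rw [add_comm n T]

lemma sub_mem_equiAlmostPeriods {T₁ T₂ : ℤ} {ε ε' : ℝ} (h₁ : T₁ ∈ equiAlmostPeriods ts ε)
    (h₂ : T₂ ∈ equiAlmostPeriods ts ε') : T₁ - T₂ ∈ equiAlmostPeriods ts (ε + ε') :=
  mem_iInter.2 fun k => sub_mem_almostPeriods (mem_iInter.1 h₁ k) (mem_iInter.1 h₂ k)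

lemma sub_mem_gammaSet_of_mem_equiAlmostPeriods {k : ℤ} {ε : ℝ}
    (hk : k ∈ equiAlmostPeriods ts ε) (m : ℤ) : ts (m + k) - ts m ∈ GammaSet ts ε := by
  refine ⟨k, fun n => ?_⟩
  have h := mem_iInter.1 hk (n - m) m
  beta_reduce at h
  rw [Real.norm_eq_abs, show m + k + (n - m) = n + k by ring, show m + (n - m) = n by ring] at h
  convert h using 2
  ring

lemma mem_gammaSet_of_abs_sub_le {r r' ε ε' : ℝ} (hr : r ∈ GammaSet ts ε) (h : |r' - r| ≤ ε') :
    r' ∈ GammaSet ts (ε + ε') := by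
  obtain ⟨k, hk⟩ := hr
  exact ⟨k, fun n => (abs_sub_le _ r _).trans (add_le_add (hk n) (by rwa [abs_sub_comm]))⟩

lemma sub_mem_gammaSet {m₁ m₂ T₁ T₂ : ℤ} {s₁ s₂ ε ε' : ℝ}
    (h₁ : T₁ ∈ equiAlmostPeriods ts ε) (h₂ : T₂ ∈ equiAlmostPeriods ts ε)
    (hm : m₁ + T₁ = m₂ + T₂) (hs : |(s₁ - ts m₁) - (s₂ - ts m₂)| ≤ ε') :
    s₁ - s₂ ∈ GammaSet ts (ε + ε + ε') := by
  have h := sub_mem_gammaSet_of_mem_equiAlmostPeriods (sub_mem_equiAlmostPeriods h₂ h₁) m₂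
  rw [show m₂ + (T₂ - T₁) = m₁ by omega] at h
  exact mem_gammaSet_of_abs_sub_le h (by convert hs using 2; ring)

lemma EquiAP.exists_window (h : EquiAP ts) :
    ∃ l : ℤ, ∀ k n, ∃ j ∈ Icc 0 l, |ts (n + k) - ts n - (ts (j + k) - ts j)| ≤ 1 := by
  obtain ⟨l, -, hl⟩ := h 1 one_pos
  refine ⟨l, fun k n => ?_⟩
  obtain ⟨T, hT, hTl, hTu⟩ := hl (-n)
  exact ⟨T + n, ⟨by omega, by omega⟩, by rw [abs_sub_comm]; exact hT k n⟩

lemma EquiAP.exists_sub_le (h : EquiAP ts) (hts : Monotone ts) :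
    ∃ g, ∀ n, ts (n + 1) - ts n ≤ g := by
  obtain ⟨l, hl⟩ := h.exists_window
  refine ⟨ts (l + 1) - ts 0 + 1, fun n => ?_⟩
  obtain ⟨j, ⟨hj0, hjl⟩, hj⟩ := hl 1 n
  have := hts (show j + 1 ≤ l + 1 by omega)
  linarith [hts hj0, (abs_le.1 hj).2]

lemma EquiAP.exists_one_le_sub (h : EquiAP ts) (hts : Monotone ts)
    (htop : Tendsto ts atTop atTop) : ∃ K : ℕ, ∀ n, 1 ≤ ts (n + K) - ts n := by
  obtain ⟨l, hl⟩ := h.exists_window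
  obtain ⟨N, hN⟩ := tendsto_atTop_atTop.1 htop (ts l + 2)
  refine ⟨N.toNat, fun n => ?_⟩
  obtain ⟨j, ⟨hj0, hjl⟩, hj⟩ := hl N.toNat n
  have := hN (j + N.toNat) (by omega)
  linarith [hts hjl, (abs_le.1 hj).1]

lemma exists_le_lt_succ (htop : Tendsto ts atTop atTop) (hbot : Tendsto ts atBot atBot) (x : ℝ) :
    ∃ m, ts m ≤ x ∧ x < ts (m + 1) := by
  obtain ⟨N, hN⟩ := tendsto_atTop_atTop.1 htop (x + 1)
  obtain ⟨N', hN'⟩ := tendsto_atBot_atBot.1 hbot x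
  obtain ⟨m, hm, hmax⟩ := Int.exists_greatest_of_bdd (P := fun n => ts n ≤ x)
    ⟨N, fun n hn => le_of_not_gt fun hNn => by linarith [hN n hNn.le]⟩ ⟨N', hN' N' le_rfl⟩
  exact ⟨m, hm, lt_of_not_ge fun h => by linarith [hmax _ h]⟩

lemma exists_forall_le_abs_sub (hts : Monotone ts) {K : ℕ} (hK : ∀ n, 1 ≤ ts (n + K) - ts n)
    {θ : ℝ} (hθ : 0 < θ) (hθK : 2 * θ * (K + 1) ≤ 1) (t : ℝ) :
    ∃ t', |t' - t| < 2 * θ * (K + 1) ∧ ∀ n, θ ≤ |t' - ts n| := by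
  by_contra! hnear
  have slot : ∀ j : ℕ, j ≤ K → ∃ p, t + 2 * θ * j < ts p ∧ ts p < t + 2 * θ * (j + 1) := by
    intro j hj
    have hjK : 2 * θ * j ≤ 2 * θ * K := by gcongr
    obtain ⟨p, hp⟩ := hnear (t + 2 * θ * j + θ)
      (by rw [show t + 2 * θ * j + θ - t = 2 * θ * j + θ by ring, abs_of_pos (by positivity)]
          linarith)
    obtain ⟨hp₁, hp₂⟩ := abs_lt.1 hp
    exact ⟨p, by linarith, by linarith⟩
  obtain ⟨p₀, hp₀, hp₀'⟩ := slot 0 K.zero_le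
  norm_num at hp₀ hp₀'
  -- every slot holds some `ts p`, so the terms `ts p₀, …, ts (p₀ + K)` climb through the slots
  have climb : ∀ j : ℕ, j ≤ K → ts (p₀ + j) < t + 2 * θ * (j + 1) := by
    intro j
    induction j with
    | zero => intro; simpa using hp₀'
    | succ j ih =>
      intro hj
      obtain ⟨p, hp₁, hp₂⟩ := slot (j + 1) hj
      have hlt : p₀ + j < p :=
        hts.reflect_lt ((ih (by omega)).trans (by push_cast at hp₁; linarith))
      have := hts (show p₀ + ↑(j + 1) ≤ p by push_cast; omega)
      push_cast at hp₂ this ⊢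
      linarith
  linarith [climb K le_rfl, hK p₀]

end Sequence

section Function

variable {ts : ℤ → ℝ} {E : Type*} [NormedAddCommGroup E] {f : ℝ → E}

def UniformContinuousOnCells (ts : ℤ → ℝ) (f : ℝ → E) : Prop :=
  ∀ ε > 0, ∃ δ > 0, ∀ n, ∀ x ∈ Icc (ts n) (ts (n + 1)), ∀ y ∈ Icc (ts n) (ts (n + 1)),
    dist x y ≤ δ → dist (f x) (f y) ≤ ε

lemma H3cond.uniformContinuousOnCells (hf : H3cond ts f) : UniformContinuousOnCells ts f := by
  intro ε hε
  obtain ⟨δ, hδ, h⟩ := (hf ε hε).2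
  refine ⟨δ, hδ, fun n x hx y hy hxy => ?_⟩
  have h' := h (y - x) (by rwa [← Real.dist_eq, dist_comm]) n x hx (by rwa [add_sub_cancel])
  rwa [add_sub_cancel, ← dist_eq_norm, dist_comm] at h'

lemma dist_le_mul_of_cells {δ ε : ℝ} (hε : 0 ≤ ε)
    (h : ∀ n, ∀ x ∈ Icc (ts n) (ts (n + 1)), ∀ y ∈ Icc (ts n) (ts (n + 1)),
      dist x y ≤ δ → dist (f x) (f y) ≤ ε)
    (d : ℕ) (m : ℤ) {x y : ℝ} (hmx : ts m ≤ x) (hxy : x ≤ y) (hyd : y ≤ ts (m + d))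
    (hyx : y - x ≤ δ) : dist (f x) (f y) ≤ d * ε := by
  induction d generalizing m x with
  | zero =>
    obtain rfl : x = y := by simp only [Nat.cast_zero, add_zero] at hyd; linarith
    simp
  | succ d ih =>
    have hyd' : y ≤ ts (m + 1 + d) := by
      rwa [show m + 1 + (d : ℤ) = m + ↑(d + 1) by push_cast; ring]
    have hd : (d : ℝ) * ε ≤ ↑(d + 1) * ε := by gcongr; simp
    have hε1 : ε ≤ ↑(d + 1) * ε := le_mul_of_one_le_left hε (by simp)
    rcases le_or_gt (ts (m + 1)) x with hx | hx
    · exact (ih (m + 1) hx hxy hyd' hyx).trans hd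
    have hxcell : x ∈ Icc (ts m) (ts (m + 1)) := ⟨hmx, hx.le⟩
    have dist_le (z : ℝ) (hxz : x ≤ z) (hzy : z ≤ y) : dist x z ≤ δ := by
      rw [dist_comm, Real.dist_eq, abs_of_nonneg (by linarith)]; linarith
    rcases le_or_gt y (ts (m + 1)) with hy | hy
    · exact (h m x hxcell y ⟨hmx.trans hxy, hy⟩ (dist_le y hxy le_rfl)).trans hε1
    calc dist (f x) (f y) ≤ dist (f x) (f (ts (m + 1))) + dist (f (ts (m + 1))) (f y) :=
          dist_triangle _ _ _
      _ ≤ ε + d * ε := add_le_add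
          (h m x hxcell _ ⟨hmx.trans hx.le, le_rfl⟩ (dist_le _ hx.le hy.le))
          (ih (m + 1) le_rfl hy.le hyd' (by linarith))
      _ = ↑(d + 1) * ε := by push_cast; ring

lemma UniformContinuousOnCells.uniformContinuous (hf : UniformContinuousOnCells ts f)
    (htop : Tendsto ts atTop atTop) (hbot : Tendsto ts atBot atBot) {K : ℕ}
    (hK : ∀ n, 1 ≤ ts (n + K) - ts n) : UniformContinuous f := by
  rw [Metric.uniformContinuous_iff]
  intro ε hε
  obtain ⟨δ, hδ, h⟩ := hf (ε / (2 * (K + 1))) (by positivity)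
  refine ⟨min δ 1, by positivity, fun {x y} hxy => ?_⟩
  wlog hle : x ≤ y generalizing x y
  · rw [dist_comm] at hxy ⊢
    exact this hxy (le_of_not_ge hle)
  have hyx : y - x ≤ min δ 1 := by
    rw [dist_comm, Real.dist_eq, abs_of_nonneg (by linarith)] at hxy; exact hxy.le
  obtain ⟨m, hmx, hxm⟩ := exists_le_lt_succ htop hbot x
  -- `y < x + 1` lies below `ts (m + 1 + K)`, so `[x, y]` meets at most `K + 1` cells
  have hyK : y ≤ ts (m + ↑(K + 1)) := by
    rw [show m + ↑(K + 1) = m + 1 + K by push_cast; ring]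
    linarith [hK (m + 1), min_le_right δ 1]
  calc dist (f x) (f y) ≤ ↑(K + 1) * (ε / (2 * (K + 1))) :=
        dist_le_mul_of_cells (by positivity) h _ m hmx hle hyK (hyx.trans (min_le_left _ _))
    _ < ε := by push_cast; field_simp; linarith

lemma almostPeriods_subset_tset {ε : ℝ} : almostPeriods f ε ⊆ Tset ts f ε :=
  fun _ hτ s _ => hτ s

lemma relDenseR_almostPeriods (hts : Monotone ts) {K : ℕ} (hK : ∀ n, 1 ≤ ts (n + K) - ts n)
    (huc : UniformContinuous f) (hT : ∀ ε > 0, RelDenseR (Tset ts f ε)) {α : ℝ} (hα : 0 < α) :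
    RelDenseR (almostPeriods f α) := by
  obtain ⟨δ, hδ, hfδ⟩ := Metric.uniformContinuous_iff.1 huc (α / 3) (by positivity)
  set θ := min (α / 3) (min δ 1 / (2 * (K + 1)))
  have hθ : 0 < θ := by positivity
  have hθK : 2 * θ * (K + 1) ≤ min δ 1 :=
    calc 2 * θ * (K + 1) ≤ 2 * (min δ 1 / (2 * (K + 1))) * (K + 1) := by
          gcongr; exact min_le_right _ _
      _ = min δ 1 := by field_simp
  obtain ⟨L, hL, hLT⟩ := hT θ hθ
  refine ⟨L, hL, fun a => ?_⟩
  obtain ⟨τ, hτ, hτa⟩ := hLT a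
  refine ⟨τ, fun t => ?_, hτa⟩
  -- move `t` to a point `t'` where the `(H3)` estimate applies, paying `α / 3` twice
  obtain ⟨t', htt', hfar⟩ :=
    exists_forall_le_abs_sub hts hK hθ (hθK.trans (min_le_right _ _)) t
  have hclose : dist t' t < δ := by rw [Real.dist_eq]; linarith [min_le_left δ 1]
  have hmid : dist (f (t' + τ)) (f t') ≤ α / 3 := by
    rw [dist_eq_norm]
    refine (hτ t' fun n hn => (hfar n).not_gt ?_).trans (min_le_left _ _)
    exact abs_sub_lt_iff.2 ⟨by linarith [hn.2], by linarith [hn.1]⟩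
  rw [← dist_eq_norm]
  calc dist (f (t + τ)) (f t)
      ≤ dist (f (t + τ)) (f (t' + τ)) + dist (f (t' + τ)) (f t') + dist (f t') (f t) :=
        dist_triangle4 _ _ _ _
    _ ≤ α / 3 + α / 3 + α / 3 := by
        gcongr
        · exact (hfδ (by rwa [dist_add_right, dist_comm])).le
        · exact (hfδ hclose).le
    _ = α := by ring

end Function

lemma relDenseR_gammaSet_inter_almostPeriods {ts : ℤ → ℝ} (hts : Monotone ts)
    (htop : Tendsto ts atTop atTop) (hbot : Tendsto ts atBot atBot) (hEqui : EquiAP ts)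
    {E : Type*} [SeminormedAddCommGroup E] {f : ℝ → E} (huc : UniformContinuous f)
    (hf : ∀ α > 0, RelDenseR (almostPeriods f α)) {ε : ℝ} (hε : 0 < ε) :
    RelDenseR (GammaSet ts ε ∩ almostPeriods f ε) := by
  obtain ⟨g, hg⟩ := hEqui.exists_sub_le hts
  set θ := ε / 3
  have hθ : 0 < θ := by positivity
  obtain ⟨δ, hδ, hball⟩ := Metric.mem_nhds_iff.1 (huc.almostPeriods_mem_nhds hθ)
  obtain ⟨l, -, hl⟩ := hEqui.relDenseZ hθ
  obtain ⟨L, -, hL⟩ := hf θ hθ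
  choose m hm using exists_le_lt_succ htop hbot
  choose T hT hTm using fun s => hl (-m s)
  choose τ hτ hτs using fun s => hL (-s)
  set η := min δ θ
  have hη : 0 < η := by positivity
  refine relDenseR_of_finite_range
    (fun s => (m s + T s, ⌊(s - ts (m s)) / η⌋, ⌊(s + τ s) / η⌋)) ?_ fun s₁ s₂ hs => ?_
  · have hmT : range (fun s => m s + T s) ⊆ Icc 0 l :=
      range_subset_iff.2 fun s => ⟨by linarith [(hTm s).1], by linarith [(hTm s).2]⟩
    have hcell (s : ℝ) : s - ts (m s) ∈ Icc 0 g :=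
      ⟨by linarith [hm s], by linarith [hm s, hg (m s)]⟩
    have hshift (s : ℝ) : s + τ s ∈ Icc 0 L := ⟨by linarith [(hτs s).1], by linarith [(hτs s).2]⟩
    exact ((finite_Icc 0 l).subset hmT).range_pair
      ((finite_range_floor_div hcell hη).range_pair (finite_range_floor_div hshift hη))
  simp only [Prod.mk.injEq] at hs
  obtain ⟨hmT, hcell, hshift⟩ := hs
  rw [show ε = θ + θ + θ by ring]
  refine ⟨sub_mem_gammaSet (hT s₁) (hT s₂) hmT
    ((abs_sub_lt_of_floor_div_eq hη hcell).le.trans (min_le_right _ _)),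
    sub_mem_almostPeriods_of_add_sub_mem (hτ s₁) (hτ s₂) (hball ?_)⟩
  rw [mem_ball_zero_iff, Real.norm_eq_abs]
  exact (abs_sub_lt_of_floor_div_eq hη hshift).trans_le (min_le_left _ _)

theorem gamma_inter_translation_set_relatively_dense_general {q : ℕ}
    (ts : ℤ → ℝ) (hts : StrictMono ts)
    (htop : Tendsto ts atTop atTop) (hbot : Tendsto ts atBot atBot)
    (hEqui : EquiAP ts)
    (f : ℝ → Vec q)
    (hf : H3cond ts f) :
    ∀ ε : ℝ, 0 < ε → RelDenseR (GammaSet ts ε ∩ Tset ts f ε) := by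
  intro ε hε
  obtain ⟨K, hK⟩ := hEqui.exists_one_le_sub hts.monotone htop
  have huc := hf.uniformContinuousOnCells.uniformContinuous htop hbot hK
  have hAP (α : ℝ) (hα : 0 < α) : RelDenseR (almostPeriods f α) :=
    relDenseR_almostPeriods hts.monotone hK huc (fun ε hε => (hf ε hε).1) hα
  exact (relDenseR_gammaSet_inter_almostPeriods hts.monotone htop hbot hEqui huc hAP hε).mono
    (inter_subset_inter_right _ almostPeriods_subset_tset)

/-- if `(t_n^{(k)})` is equipotentially almost periodic and `f` satisfies
`(H3)`, then `Γ_ε ∩ T(f, ε)` is relatively dense. -/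
theorem gamma_inter_translation_set_relatively_dense {q : ℕ} (hq : 1 ≤ q)
    (ts : ℤ → ℝ) (hts : StrictMono ts)
    (htop : Tendsto ts atTop atTop) (hbot : Tendsto ts atBot atBot)
    (hEqui : EquiAP ts)
    (f : ℝ → Vec q) (hfloc : MeasureTheory.LocallyIntegrable f)
    (hf : H3cond ts f) :
    ∀ ε : ℝ, 0 < ε → RelDenseR (GammaSet ts ε ∩ Tset ts f ε) :=
  gamma_inter_translation_set_relatively_dense_general ts hts htop hbot hEqui f hf

end
end

section
/- Assume A and B are continuous and bounded, 𝒥_n(t) is invertible for every n ∈ ℤ and t ∈ [t_n, t_{n+1}] with M := sup_{n∈ℤ} sup_{t∈[t_n,t_{n+1}]} |𝒥_n(t)^{-1}| < ∞, every H(n) = Z_n(t_{n+1}) is invertible, and the difference equation φ(n+1) = H(n)φ(n) is exponentially stable, i.e. |Φ(n)Φ(k+1)^{-1}| ≤ Kρ^{n−k} for all n ≥ k with K ≥ 1 and 0 < ρ < 1. For r ∈ ℝ let k(r) be the unique n with r ∈ [t_n, t_{n+1}), and for s, t with k(s) < k(t) define the Cauchy matrix Z(t,s) = Z_{k(t)}(t)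 · Φ(k(t))Φ(k(s))^{-1} · Z_{k(s)}(s)^{-1}. Then there exists K₄ > 0 such that |Z(t,s)| ≤ K₄ · ρ^{(t−s)/θ} for all s ≤ t with k(s) < k(t). -/
open scoped Matrix
open MeasureTheory Filter

attribute [local instance] Matrix.frobeniusSeminormedAddCommGroup
  Matrix.frobeniusNormedAddCommGroup Matrix.frobeniusNormedSpace
  Matrix.frobeniusNormedRing Matrix.frobeniusNormedAlgebra Matrix.frobeniusIsBoundedSMul

noncomputable section

/-!
On a window `[t_n, t_{n+1}]`, whose length is at most `θ`, Grönwall's inequality (applied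
forwards and backwards in time) bounds both `X(t, t_n)` and `X(t_n, t)` by `‖I‖ e^{aθ}`, where
`a` bounds `‖A‖`. Hence `Z_n(t) = X(t, t_n) 𝒥_n(t)` and `Z_n(t)⁻¹ = 𝒥_n(t)⁻¹ X(t_n, t)` are
bounded uniformly in `n` and `t`. The middle factor is `Φ(n) Φ((m - 1) + 1)⁻¹`, of norm at most
`K ρ^{n-m+1}`, and `r - s < t_{n+1} - t_m ≤ (n - m + 1) θ` turns this into `K ρ^{(r-s)/θ}`.
-/

open Real

section Gronwall

variable {E : Type*} [NormedAddCommGroup E] [NormedSpace ℝ E] {f f' : ℝ → E} {K : ℝ}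

theorem norm_le_norm_mul_exp_of_norm_deriv_le (hf : ∀ x, HasDerivAt f (f' x) x)
    (bound : ∀ x, ‖f' x‖ ≤ K * ‖f x‖) {s t : ℝ} (hst : s ≤ t) :
    ‖f t‖ ≤ ‖f s‖ * exp (K * (t - s)) := by
  have h := norm_le_gronwallBound_of_norm_deriv_right_le (δ := ‖f s‖) (ε := 0)
    (fun x _ => (hf x).continuousAt.continuousWithinAt) (fun x _ => (hf x).hasDerivWithinAt)
    le_rfl (fun x _ => by simpa using bound x) t ⟨hst, le_rfl⟩
  rwa [gronwallBound_ε0] at h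

theorem norm_le_norm_mul_exp_abs_of_norm_deriv_le (hf : ∀ x, HasDerivAt f (f' x) x)
    (bound : ∀ x, ‖f' x‖ ≤ K * ‖f x‖) (s t : ℝ) :
    ‖f t‖ ≤ ‖f s‖ * exp (K * |t - s|) := by
  rcases le_total s t with hst | hts
  · rw [abs_of_nonneg (sub_nonneg.2 hst)]
    exact norm_le_norm_mul_exp_of_norm_deriv_le hf bound hst
  · have hg : ∀ x, HasDerivAt (fun y => f (-y)) (-f' (-x)) x := fun x => by
      simpa [Function.comp_def] using (hf (-x)).scomp x (hasDerivAt_neg x)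
    have h := norm_le_norm_mul_exp_of_norm_deriv_le hg (fun x => by simpa using bound (-x))
      (neg_le_neg hts)
    rw [abs_of_nonpos (sub_nonpos.2 hts)]
    simpa [neg_add_eq_sub] using h

end Gronwall

section Propagator

variable {q : ℕ} {A B X : ℝ → Mat q} {ts : ℤ → ℝ} {θ a b : ℝ}

theorem norm_XX_le (hX : ∀ t, HasDerivAt X (A t * X t) t) (ha : ∀ t, ‖A t‖ ≤ a) {s : ℝ}
    (hXs : IsUnit (X s)) (t : ℝ) :
    ‖XX X t s‖ ≤ ‖(1 : Mat q)‖ * exp (a * |t - s|) := by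
  have h := norm_le_norm_mul_exp_abs_of_norm_deriv_le (f := fun t => XX X t s)
    (fun t => by simpa only [XX, mul_assoc] using (hX t).mul_const (X s)⁻¹)
    (fun t => (norm_mul_le _ _).trans (mul_le_mul_of_nonneg_right (ha t) (norm_nonneg _))) s t
  have hss : XX X s s = 1 := Matrix.mul_nonsing_inv _ ((Matrix.isUnit_iff_isUnit_det _).mp hXs)
  rwa [hss] at h

theorem norm_XX_le_of_abs_sub_le (hX : ∀ t, HasDerivAt X (A t * X t) t)
    (ha : ∀ t, ‖A t‖ ≤ a) {s t : ℝ} (hXs : IsUnit (X s)) (hst : |t - s| ≤ θ) :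
    ‖XX X t s‖ ≤ ‖(1 : Mat q)‖ * exp (a * θ) := by
  have ha0 : 0 ≤ a := (norm_nonneg _).trans (ha 0)
  exact (norm_XX_le hX ha hXs t).trans (by gcongr)

variable {n : ℤ} {r : ℝ}

theorem norm_XX_le_of_mem_Icc (hX : ∀ t, HasDerivAt X (A t * X t) t)
    (hXinv : ∀ t, IsUnit (X t)) (ha : ∀ t, ‖A t‖ ≤ a) (hgap : ts (n + 1) - ts n ≤ θ)
    (hr : r ∈ Set.Icc (ts n) (ts (n + 1))) :
    ‖XX X r (ts n)‖ ≤ ‖(1 : Mat q)‖ * exp (a * θ) ∧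
      ‖XX X (ts n) r‖ ≤ ‖(1 : Mat q)‖ * exp (a * θ) := by
  have hrn : |r - ts n| ≤ θ := by rw [abs_le]; constructor <;> linarith [hr.1, hr.2]
  exact ⟨norm_XX_le_of_abs_sub_le hX ha (hXinv _) hrn,
    norm_XX_le_of_abs_sub_le hX ha (hXinv _) (by rwa [abs_sub_comm])⟩

theorem norm_Jmat_le (hX : ∀ t, HasDerivAt X (A t * X t) t) (hXinv : ∀ t, IsUnit (X t))
    (ha : ∀ t, ‖A t‖ ≤ a) (hb : ∀ t, ‖B t‖ ≤ b) (hgap : ts (n + 1) - ts n ≤ θ)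
    (hr : r ∈ Set.Icc (ts n) (ts (n + 1))) :
    ‖Jmat X B ts n r‖ ≤ ‖(1 : Mat q)‖ + ‖(1 : Mat q)‖ * exp (a * θ) * b * θ := by
  have hb0 : 0 ≤ b := (norm_nonneg _).trans (hb 0)
  have hint : ‖∫ u in (ts n)..r, XX X (ts n) u * B u‖ ≤
      ‖(1 : Mat q)‖ * exp (a * θ) * b * |r - ts n| := by
    refine intervalIntegral.norm_integral_le_of_norm_le_const fun u hu => ?_
    rw [Set.uIoc_of_le hr.1] at hu
    exact (norm_mul_le _ _).trans (mul_le_mul (norm_XX_le_of_mem_Icc hX hXinv ha hgap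
      ⟨hu.1.le, hu.2.trans hr.2⟩).2 (hb u) (norm_nonneg _) (by positivity))
  refine (norm_add_le _ _).trans (add_le_add_right (hint.trans ?_) _)
  gcongr
  rw [abs_of_nonneg (sub_nonneg.2 hr.1)]
  linarith [hr.2]

theorem norm_Zmat_le (hX : ∀ t, HasDerivAt X (A t * X t) t) (hXinv : ∀ t, IsUnit (X t))
    (ha : ∀ t, ‖A t‖ ≤ a) (hb : ∀ t, ‖B t‖ ≤ b) (hgap : ts (n + 1) - ts n ≤ θ)
    (hr : r ∈ Set.Icc (ts n) (ts (n + 1))) :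
    ‖Zmat X B ts n r‖ ≤ ‖(1 : Mat q)‖ * exp (a * θ) *
      (‖(1 : Mat q)‖ + ‖(1 : Mat q)‖ * exp (a * θ) * b * θ) :=
  (norm_mul_le _ _).trans (mul_le_mul (norm_XX_le_of_mem_Icc hX hXinv ha hgap hr).1
    (norm_Jmat_le hX hXinv ha hb hgap hr) (norm_nonneg _) (by positivity))

theorem Zmat_inv (hXn : IsUnit (X (ts n))) :
    (Zmat X B ts n r)⁻¹ = (Jmat X B ts n r)⁻¹ * XX X (ts n) r := by
  rw [Zmat, XX, XX, Matrix.mul_inv_rev, Matrix.mul_inv_rev,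
    Matrix.nonsing_inv_nonsing_inv _ ((Matrix.isUnit_iff_isUnit_det _).mp hXn)]

theorem norm_Zmat_inv_le (hX : ∀ t, HasDerivAt X (A t * X t) t) (hXinv : ∀ t, IsUnit (X t))
    (ha : ∀ t, ‖A t‖ ≤ a) (hgap : ts (n + 1) - ts n ≤ θ) (hr : r ∈ Set.Icc (ts n) (ts (n + 1)))
    {M : ℝ} (hM : ‖(Jmat X B ts n r)⁻¹‖ ≤ M) :
    ‖(Zmat X B ts n r)⁻¹‖ ≤ M * (‖(1 : Mat q)‖ * exp (a * θ)) := by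
  rw [Zmat_inv (hXinv _)]
  exact (norm_mul_le _ _).trans (mul_le_mul hM (norm_XX_le_of_mem_Icc hX hXinv ha hgap hr).2
    (norm_nonneg _) ((norm_nonneg _).trans hM))

end Propagator

section Discrete

variable {ts : ℤ → ℝ} {θ : ℝ}

theorem sub_le_mul_of_forall_succ_sub_le (hgap : ∀ n, ts (n + 1) - ts n ≤ θ) {m k : ℤ}
    (hmk : m ≤ k) : ts k - ts m ≤ ((k : ℝ) - m) * θ := by
  induction k, hmk using Int.leInduction with
  | base => simp
  | succ k _ ih => push_cast; linarith [hgap k]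

theorem norm_mul_inv_le_rpow_of_stable {R : Type*} [Norm R] [Mul R] [Inv R] {Φ : ℤ → R}
    {K ρ : ℝ} (hK : 0 ≤ K) (hρ0 : 0 < ρ) (hρ1 : ρ ≤ 1) (hθ : 0 < θ)
    (hgap : ∀ n, ts (n + 1) - ts n ≤ θ)
    (hstab : ∀ n k : ℤ, k ≤ n → ‖Φ n * (Φ (k + 1))⁻¹‖ ≤ K * ρ ^ (n - k))
    {m n : ℤ} (hmn : m ≤ n + 1) {s r : ℝ} (hs : ts m ≤ s) (hr : r < ts (n + 1)) :
    ‖Φ n * (Φ m)⁻¹‖ ≤ K * ρ ^ ((r - s) / θ) := by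
  have hexp : (r - s) / θ ≤ ((n - (m - 1) : ℤ) : ℝ) := by
    rw [div_le_iff₀ hθ]
    have := sub_le_mul_of_forall_succ_sub_le hgap hmn
    push_cast at this ⊢
    linarith
  have h := hstab n (m - 1) (by omega)
  rw [sub_add_cancel, ← Real.rpow_intCast] at h
  exact h.trans (mul_le_mul_of_nonneg_left (Real.rpow_le_rpow_of_exponent_ge hρ0 hρ1 hexp) hK)

end Discrete

theorem cauchy_matrix_exponential_decay_general {q : ℕ}
    (ts : ℤ → ℝ)
    (θ : ℝ) (hθpos : 0 < θ) (hθ : IsLUB (Set.range fun n : ℤ => ts (n + 1) - ts n) θ)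
    (A B : ℝ → Mat q)
    (hAbdd : ∃ C : ℝ, ∀ t : ℝ, ‖A t‖ ≤ C) (hBbdd : ∃ C : ℝ, ∀ t : ℝ, ‖B t‖ ≤ C)
    (X : ℝ → Mat q) (hX : ∀ t : ℝ, HasDerivAt X (A t * X t) t)
    (hXinv : ∀ t : ℝ, IsUnit (X t))
    (hJbdd : ∃ M : ℝ, ∀ n : ℤ, ∀ r ∈ Set.Icc (ts n) (ts (n + 1)),
      ‖(Jmat X B ts n r)⁻¹‖ ≤ M)
    (Φ : ℤ → Mat q)
    (K ρ : ℝ) (hK : 1 ≤ K) (hρ0 : 0 < ρ) (hρ1 : ρ < 1)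
    (hstab : ∀ n k : ℤ, k ≤ n → ‖Φ n * (Φ (k + 1))⁻¹‖ ≤ K * ρ ^ (n - k)) :
    ∃ K₄ : ℝ, 0 < K₄ ∧
      ∀ m n : ℤ, m < n →
        ∀ s ∈ Set.Ico (ts m) (ts (m + 1)), ∀ r ∈ Set.Ico (ts n) (ts (n + 1)),
          ‖Zmat X B ts n r * (Φ n * (Φ m)⁻¹) * (Zmat X B ts m s)⁻¹‖ ≤
            K₄ * Real.rpow ρ ((r - s) / θ) := by
  obtain ⟨a, ha⟩ := hAbdd
  obtain ⟨b, hb⟩ := hBbdd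
  obtain ⟨M, hM⟩ := hJbdd
  have hgap : ∀ n, ts (n + 1) - ts n ≤ θ := fun n => hθ.1 ⟨n, rfl⟩
  set E := ‖(1 : Mat q)‖ * exp (a * θ)
  set C := E * (‖(1 : Mat q)‖ + E * b * θ) * K * (M * E)
  refine ⟨max 1 C, one_pos.trans_le (le_max_left _ _), fun m n hmn s hs r hr => ?_⟩
  have hZ := norm_Zmat_le hX hXinv ha hb (hgap n) (Set.Ico_subset_Icc_self hr)
  have hZinv := norm_Zmat_inv_le hX hXinv ha (hgap m) (Set.Ico_subset_Icc_self hs)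
    (hM m s (Set.Ico_subset_Icc_self hs))
  have hΦ := norm_mul_inv_le_rpow_of_stable (by linarith) hρ0 hρ1.le hθpos hgap hstab
    (by omega) hs.1 hr.2
  have hZ0 := (norm_nonneg _).trans hZ
  calc ‖Zmat X B ts n r * (Φ n * (Φ m)⁻¹) * (Zmat X B ts m s)⁻¹‖
      ≤ ‖Zmat X B ts n r‖ * ‖Φ n * (Φ m)⁻¹‖ * ‖(Zmat X B ts m s)⁻¹‖ := norm_mul₃_le
    _ ≤ E * (‖(1 : Mat q)‖ + E * b * θ) * (K * ρ ^ ((r - s) / θ)) * (M * E) :=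
        mul_le_mul (mul_le_mul hZ hΦ (norm_nonneg _) hZ0) hZinv (norm_nonneg _)
          (mul_nonneg hZ0 ((norm_nonneg _).trans hΦ))
    _ = C * ρ ^ ((r - s) / θ) := by ring
    _ ≤ max 1 C * ρ ^ ((r - s) / θ) := by gcongr; exact le_max_right _ _

/-- if the difference equation `φ(n+1) = H(n)φ(n)` is exponentially stable
and the inverses `𝒥_n(t)⁻¹` are uniformly bounded, then the Cauchy matrix
`Z(t,s) = Z_{k(t)}(t) Φ(k(t)) Φ(k(s))⁻¹ Z_{k(s)}(s)⁻¹` decays exponentially: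
`‖Z(t,s)‖ ≤ K₄ ρ^{(t−s)/θ}` whenever `s ≤ t` lie in intervals `[t_{k(s)}, t_{k(s)+1})`,
`[t_{k(t)}, t_{k(t)+1})` with `k(s) < k(t)`. -/
theorem cauchy_matrix_exponential_decay {q : ℕ} (hq : 1 ≤ q)
    (ts : ℤ → ℝ) (hts : StrictMono ts)
    (htop : Tendsto ts atTop atTop) (hbot : Tendsto ts atBot atBot)
    (θ : ℝ) (hθpos : 0 < θ) (hθ : IsLUB (Set.range fun n : ℤ => ts (n + 1) - ts n) θ)
    (A B : ℝ → Mat q) (hAcont : Continuous A) (hBcont : Continuous B)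
    (hAbdd : ∃ C : ℝ, ∀ t : ℝ, ‖A t‖ ≤ C) (hBbdd : ∃ C : ℝ, ∀ t : ℝ, ‖B t‖ ≤ C)
    (X : ℝ → Mat q) (hX : ∀ t : ℝ, HasDerivAt X (A t * X t) t)
    (hXinv : ∀ t : ℝ, IsUnit (X t))
    (hJ : ∀ n : ℤ, ∀ r ∈ Set.Icc (ts n) (ts (n + 1)), IsUnit (Jmat X B ts n r))
    (hJbdd : ∃ M : ℝ, ∀ n : ℤ, ∀ r ∈ Set.Icc (ts n) (ts (n + 1)),
      ‖(Jmat X B ts n r)⁻¹‖ ≤ M)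
    (hHinv : ∀ n : ℤ, IsUnit (Zmat X B ts n (ts (n + 1))))
    (Φ : ℤ → Mat q) (hΦinv : ∀ n : ℤ, IsUnit (Φ n))
    (hΦ : ∀ n : ℤ, Φ (n + 1) = Zmat X B ts n (ts (n + 1)) * Φ n)
    (K ρ : ℝ) (hK : 1 ≤ K) (hρ0 : 0 < ρ) (hρ1 : ρ < 1)
    (hstab : ∀ n k : ℤ, k ≤ n → ‖Φ n * (Φ (k + 1))⁻¹‖ ≤ K * ρ ^ (n - k)) :
    ∃ K₄ : ℝ, 0 < K₄ ∧
      ∀ m n : ℤ, m < n →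
        ∀ s ∈ Set.Ico (ts m) (ts (m + 1)), ∀ r ∈ Set.Ico (ts n) (ts (n + 1)),
          ‖Zmat X B ts n r * (Φ n * (Φ m)⁻¹) * (Zmat X B ts m s)⁻¹‖ ≤
            K₄ * Real.rpow ρ ((r - s) / θ) :=
  cauchy_matrix_exponential_decay_general ts θ hθpos hθ A B hAbdd hBbdd X hX hXinv hJbdd Φ K ρ hK
    hρ0 hρ1 hstab
end
end
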